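/- arXiv:1201.6464 — 9 statements merged into one kernel-verified Lean document; each statement's English description precedes it below -/
import Mathlib

section
/- For u, v > 0, the Rogers dilogarithm function R(u) = L(u/(1+u)) satisfies R(u) + R(v) = R(v/(1+u)) + R(uv/(1+u+v)) + R(u/(1+v)). -/
open Real MeasureTheory Filter Set intervalIntegral

/-- The Euler dilogarithm `Li₂(x) = -∫₀ˣ log(1-t)/t dt` (for real `x ≤ 1`). -/
noncomputable def Li2 (x : ℝ) : ℝ := -∫ t in (0:ℝ)..x, Real.log (1 - t) / t

lemma li2_meas : Measurable (fun t : ℝ => Real.log (1 - t) / t) :=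
  (Real.measurable_log.comp (measurable_const.sub measurable_id)).div measurable_id

lemma li2_bound {x t : ℝ} (hx1 : x < 1) (ht : t ∈ Set.Ioc 0 x) :
    ‖Real.log (1 - t) / t‖ ≤ 1 / (1 - x) := by
  obtain ⟨ht0, htx⟩ := ht
  have h1t : 0 < 1 - t := by linarith
  have hlogle : Real.log (1 - t) ≤ 0 := Real.log_nonpos (by linarith) (by linarith)
  have key : -Real.log (1 - t) ≤ t / (1 - t) := by
    have := Real.log_le_sub_one_of_pos (x := (1 - t)⁻¹) (by positivity)
    rw [Real.log_inv] at this
    have : -Real.log (1 - t) ≤ (1 - t)⁻¹ - 1 := this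
    calc -Real.log (1 - t) ≤ (1 - t)⁻¹ - 1 := this
    _ = t / (1 - t) := by field_simp; ring
  have : ‖Real.log (1 - t) / t‖ = (-Real.log (1 - t)) / t := by
    rw [Real.norm_eq_abs, abs_div, abs_of_nonpos hlogle, abs_of_pos ht0, neg_div]
  rw [this]
  rw [div_le_div_iff₀ ht0 (by linarith)]
  calc -Real.log (1 - t) * (1 - x) ≤ (t / (1 - t)) * (1 - x) := by
        apply mul_le_mul_of_nonneg_right key (by linarith)
    _ ≤ 1 * t := by
        rw [div_mul_eq_mul_div, div_le_iff₀ h1t, one_mul]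
        nlinarith

lemma li2_integrable {x : ℝ} (hx0 : 0 ≤ x) (hx1 : x < 1) :
    IntervalIntegrable (fun t => Real.log (1 - t) / t) volume 0 x := by
  rw [intervalIntegrable_iff, Set.uIoc_of_le hx0]
  apply MeasureTheory.Integrable.mono' (g := fun _ => 1 / (1 - x))
    (integrable_const _) li2_meas.aestronglyMeasurable
  · filter_upwards [MeasureTheory.ae_restrict_mem measurableSet_Ioc] with t ht
    exact li2_bound hx1 ht

lemma li2_hasDerivAt {x : ℝ} (hx0 : 0 < x) (hx1 : x < 1) :
    HasDerivAt Li2 (-(Real.log (1 - x) / x)) x := by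
  have hcont : ContinuousAt (fun t : ℝ => Real.log (1 - t) / t) x := by
    apply ContinuousAt.div
    · exact (Real.continuousAt_log (by linarith)).comp (by fun_prop)
    · fun_prop
    · exact hx0.ne'
  have := intervalIntegral.integral_hasDerivAt_right (li2_integrable hx0.le hx1)
    (li2_meas.stronglyMeasurable.stronglyMeasurableAtFilter) hcont
  exact this.neg

/-- The Rogers dilogarithm `L(x) = Li₂(x) + (1/2) log x log(1-x)` for `0 < x < 1`. -/
noncomputable def RogersL (x : ℝ) : ℝ := Li2 x + (1 / 2) * Real.log x * Real.log (1 - x)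

/-- `R(u) = L(u/(1+u))` for `u > 0`. -/
noncomputable def RogersR (u : ℝ) : ℝ := RogersL (u / (1 + u))

lemma rogersL_hasDerivAt {x : ℝ} (hx0 : 0 < x) (hx1 : x < 1) :
    HasDerivAt RogersL
      (-(1/2) * (Real.log (1 - x) / x + Real.log x / (1 - x))) x := by
  have h1 : HasDerivAt (fun y : ℝ => Real.log y) (1/x) x := by
    simpa [one_div] using Real.hasDerivAt_log hx0.ne'
  have h2 : HasDerivAt (fun y : ℝ => Real.log (1 - y)) (-(1/(1-x))) x := by
    have := (Real.hasDerivAt_log (by linarith : (1:ℝ) - x ≠ 0)).comp x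
      ((hasDerivAt_const x (1:ℝ)).sub (hasDerivAt_id x))
    simpa [one_div, Function.comp_def] using this
  have h3 : HasDerivAt (fun y : ℝ => (1/2) * Real.log y * Real.log (1 - y))
      ((1/2) * (1/x) * Real.log (1 - x) + (1/2) * Real.log x * (-(1/(1-x)))) x := by
    exact ((h1.const_mul (1/2:ℝ)).mul h2)
  have := (li2_hasDerivAt hx0 hx1).add h3
  refine this.congr_deriv ?_
  ring

lemma frac_hasDerivAt {u : ℝ} (hu : (1:ℝ) + u ≠ 0) :
    HasDerivAt (fun w : ℝ => w / (1 + w)) (1 / (1 + u)^2) u := by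
  have := (hasDerivAt_id u).div ((hasDerivAt_const u (1:ℝ)).add (hasDerivAt_id u)) hu
  refine this.congr_deriv ?_
  simp only [Pi.add_apply, id_eq]
  field_simp
  ring

lemma rogersR_hasDerivAt {u : ℝ} (hu : 0 < u) :
    HasDerivAt RogersR
      ((1/2) * (Real.log (1 + u) / u - Real.log u / (1 + u))) u := by
  have h1u : (0:ℝ) < 1 + u := by linarith
  have hx0 : 0 < u / (1 + u) := by positivity
  have hx1 : u / (1 + u) < 1 := by
    rw [div_lt_one h1u]; linarith
  have hcomp := (rogersL_hasDerivAt hx0 hx1).comp u (frac_hasDerivAt h1u.ne')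
  have : RogersR = RogersL ∘ (fun w : ℝ => w / (1 + w)) := rfl
  rw [this]
  refine hcomp.congr_deriv ?_
  have e1 : 1 - u / (1 + u) = 1 / (1 + u) := by field_simp; ring
  have e2 : Real.log (u / (1 + u)) = Real.log u - Real.log (1 + u) :=
    Real.log_div hu.ne' h1u.ne'
  have e3 : Real.log (1 / (1 + u)) = -Real.log (1 + u) := by
    rw [one_div, Real.log_inv]
  rw [e1, e2, e3]
  field_simp
  ring

lemma five_term_deriv_zero {v : ℝ} (hv : 0 < v) {u : ℝ} (hu : 0 < u) :
    HasDerivAt (fun u => RogersR u + RogersR v - RogersR (v / (1 + u))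
      - RogersR (u * v / (1 + u + v)) - RogersR (u / (1 + v))) 0 u := by
  have h1u : (0:ℝ) < 1 + u := by linarith
  have h1v : (0:ℝ) < 1 + v := by linarith
  have hs : (0:ℝ) < 1 + u + v := by linarith
  have ha : 0 < v / (1 + u) := by positivity
  have hb : 0 < u * v / (1 + u + v) := by positivity
  have hc : 0 < u / (1 + v) := by positivity
  -- derivatives of the inner arguments
  have hda : HasDerivAt (fun u : ℝ => v / (1 + u)) (-(v / (1 + u)^2)) u := by
    have := (hasDerivAt_const u v).div ((hasDerivAt_const u (1:ℝ)).add (hasDerivAt_id u)) h1u.ne'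
    refine this.congr_deriv ?_
    simp only [Pi.add_apply, id_eq]
    field_simp
    ring
  have hdb : HasDerivAt (fun u : ℝ => u * v / (1 + u + v)) (v * (1 + v) / (1 + u + v)^2) u := by
    have hden : HasDerivAt (fun u : ℝ => 1 + u + v) 1 u := by
      simpa using (((hasDerivAt_const u (1:ℝ)).add (hasDerivAt_id u)).add_const v)
    have := ((hasDerivAt_id u).mul_const v).div hden hs.ne'
    refine this.congr_deriv ?_
    simp only [id_eq]
    field_simp
    ring
  have hdc : HasDerivAt (fun u : ℝ => u / (1 + v)) (1 / (1 + v)) u := by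
    simpa using (hasDerivAt_id u).div_const (1 + v)
  have hA := rogersR_hasDerivAt hu
  have hRa := (rogersR_hasDerivAt ha).comp u hda
  have hRb := (rogersR_hasDerivAt hb).comp u hdb
  have hRc := (rogersR_hasDerivAt hc).comp u hdc
  have hF := (((hA.add_const (RogersR v)).sub hRa).sub hRb).sub hRc
  refine hF.congr_deriv ?_
  -- now prove the derivative is 0
  have e1 : (1:ℝ) + v / (1 + u) = (1 + u + v) / (1 + u) := by field_simp
  have e2 : (1:ℝ) + u * v / (1 + u + v) = ((1 + u) * (1 + v)) / (1 + u + v) := by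
    field_simp; ring
  have e3 : (1:ℝ) + u / (1 + v) = (1 + u + v) / (1 + v) := by field_simp; ring
  rw [e1, e2, e3,
    Real.log_div hv.ne' h1u.ne',
    Real.log_div hs.ne' h1u.ne',
    Real.log_div (mul_pos hu hv).ne' hs.ne', Real.log_mul hu.ne' hv.ne',
    Real.log_div (mul_pos h1u h1v).ne' hs.ne', Real.log_mul h1u.ne' h1v.ne',
    Real.log_div hu.ne' h1v.ne',
    Real.log_div hs.ne' h1v.ne']
  have hune := hu.ne'
  have h1une := h1u.ne'
  have h1vne := h1v.ne'
  have hsne := hs.ne'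
  have hvne := hv.ne'
  field_simp
  ring

lemma li2_tendsto_zero : Tendsto Li2 (nhdsWithin 0 (Set.Ioi 0)) (nhds 0) := by
  apply squeeze_zero_norm' (a := fun x => 2 * x)
  · filter_upwards [Ioc_mem_nhdsGT_of_mem (by norm_num : (0:ℝ) ∈ Set.Ico (0:ℝ) (1/2))]
      with x hx
    have hx0 : 0 < x := hx.1
    have hx2 : x ≤ 1/2 := hx.2
    have hx1 : x < 1 := by linarith
    have hb : ∀ t ∈ Set.uIoc (0:ℝ) x, ‖Real.log (1 - t) / t‖ ≤ 2 := by
      intro t ht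
      rw [Set.uIoc_of_le hx0.le] at ht
      calc ‖Real.log (1 - t) / t‖ ≤ 1 / (1 - x) := li2_bound hx1 ht
        _ ≤ 2 := by rw [div_le_iff₀ (by linarith)]; linarith
    calc ‖Li2 x‖ = ‖∫ t in (0:ℝ)..x, Real.log (1 - t) / t‖ := by rw [Li2, norm_neg]
      _ ≤ 2 * |x - 0| := intervalIntegral.norm_integral_le_of_norm_le_const hb
      _ = 2 * x := by rw [sub_zero, abs_of_pos hx0]
  · have : Tendsto (fun x : ℝ => 2 * x) (nhds 0) (nhds 0) := by
      simpa using ((continuous_mul_left (2:ℝ)).tendsto (0:ℝ))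
    exact this.mono_left nhdsWithin_le_nhds

lemma logterm_tendsto_zero :
    Tendsto (fun x => (1/2) * Real.log x * Real.log (1 - x))
      (nhdsWithin 0 (Set.Ioi 0)) (nhds 0) := by
  apply squeeze_zero_norm' (a := fun x => -(Real.log x * x))
  · filter_upwards [Ioc_mem_nhdsGT_of_mem (by norm_num : (0:ℝ) ∈ Set.Ico (0:ℝ) (1/2))]
      with x hx
    have hx0 : 0 < x := hx.1
    have hx2 : x ≤ 1/2 := hx.2
    have hlx : Real.log x ≤ 0 := Real.log_nonpos hx0.le (by linarith)
    have h1x : 0 < 1 - x := by linarith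
    have hl1x : Real.log (1 - x) ≤ 0 := Real.log_nonpos h1x.le (by linarith)
    have key : -Real.log (1 - x) ≤ 2 * x := by
      have := Real.log_le_sub_one_of_pos (x := (1 - x)⁻¹) (by positivity)
      rw [Real.log_inv] at this
      have h2 : (1 - x)⁻¹ - 1 = x / (1 - x) := by field_simp; ring
      have h3 : x / (1 - x) ≤ 2 * x := by
        rw [div_le_iff₀ h1x]; nlinarith
      rw [h2] at this
      linarith
    have : ‖(1/2) * Real.log x * Real.log (1 - x)‖
        = (1/2) * (-Real.log x) * (-Real.log (1 - x)) := by
      rw [norm_mul, norm_mul, Real.norm_eq_abs, Real.norm_eq_abs, Real.norm_eq_abs,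
        abs_of_nonpos hlx, abs_of_nonpos hl1x, abs_of_pos (by norm_num : (0:ℝ) < 1/2)]
    rw [this]
    calc (1/2) * (-Real.log x) * (-Real.log (1 - x))
        ≤ (1/2) * (-Real.log x) * (2 * x) := by
          apply mul_le_mul_of_nonneg_left key (by nlinarith [neg_nonneg.mpr hlx])
      _ = -(Real.log x * x) := by ring
  · have h := tendsto_log_mul_rpow_nhdsGT_zero (r := 1) one_pos
    simp only [Real.rpow_one] at h
    simpa using h.neg

lemma rogersL_tendsto_zero : Tendsto RogersL (nhdsWithin 0 (Set.Ioi 0)) (nhds 0) := by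
  have h := li2_tendsto_zero.add logterm_tendsto_zero
  rw [add_zero] at h
  exact h.congr (fun x => rfl)

lemma rogersR_tendsto_zero : Tendsto RogersR (nhdsWithin 0 (Set.Ioi 0)) (nhds 0) := by
  have hg : Tendsto (fun u : ℝ => u / (1 + u)) (nhdsWithin 0 (Set.Ioi 0))
      (nhdsWithin 0 (Set.Ioi 0)) := by
    apply tendsto_nhdsWithin_of_tendsto_nhds_of_eventually_within
    · have : ContinuousAt (fun u : ℝ => u / (1 + u)) 0 := by
        apply ContinuousAt.div (by fun_prop) (by fun_prop) (by norm_num)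
      simpa using this.tendsto.mono_left nhdsWithin_le_nhds
    · filter_upwards [self_mem_nhdsWithin] with x hx
      have hx : (0:ℝ) < x := hx
      exact Set.mem_Ioi.mpr (by positivity)
  exact rogersL_tendsto_zero.comp hg

/-- Volkov's form of the five-term relation: for `u, v > 0`,
`R(u) + R(v) = R(v/(1+u)) + R(uv/(1+u+v)) + R(u/(1+v))`. -/
theorem rogersR_five_term (u v : ℝ) (hu : 0 < u) (hv : 0 < v) :
    RogersR u + RogersR v =
      RogersR (v / (1 + u)) + RogersR (u * v / (1 + u + v)) + RogersR (u / (1 + v)) := by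
  set F : ℝ → ℝ := fun w => RogersR w + RogersR v - RogersR (v / (1 + w))
      - RogersR (w * v / (1 + w + v)) - RogersR (w / (1 + v)) with hFdef
  have hconst : ∀ w, 0 < w → w ≤ u → F u = F w := by
    intro w hw hwu
    have hcont : ContinuousOn F (Set.Icc w u) := fun x hx =>
      ((five_term_deriv_zero hv (lt_of_lt_of_le hw hx.1)).continuousAt).continuousWithinAt
    have hderiv : ∀ x ∈ Set.Ico w u, HasDerivWithinAt F 0 (Set.Ici x) x := fun x hx =>
      (five_term_deriv_zero hv (lt_of_lt_of_le hw hx.1)).hasDerivWithinAt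
    exact constant_of_has_deriv_right_zero hcont hderiv u ⟨hwu, le_refl u⟩
  have h1v : (0:ℝ) < 1 + v := by linarith
  have hRv : ContinuousAt RogersR v := (rogersR_hasDerivAt hv).continuousAt
  have t1 : Tendsto (fun w => RogersR w) (nhdsWithin 0 (Set.Ioi 0)) (nhds 0) :=
    rogersR_tendsto_zero
  have t2 : Tendsto (fun w : ℝ => RogersR (v / (1 + w))) (nhdsWithin 0 (Set.Ioi 0))
      (nhds (RogersR v)) := by
    have hca : ContinuousAt (fun w : ℝ => v / (1 + w)) 0 :=
      ContinuousAt.div (by fun_prop) (by fun_prop) (by norm_num)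
    have harg : Tendsto (fun w : ℝ => v / (1 + w)) (nhds 0) (nhds v) := by
      simpa using hca.tendsto
    exact hRv.tendsto.comp (harg.mono_left nhdsWithin_le_nhds)
  have t3 : Tendsto (fun w : ℝ => RogersR (w * v / (1 + w + v)))
      (nhdsWithin 0 (Set.Ioi 0)) (nhds 0) := by
    apply rogersR_tendsto_zero.comp
    apply tendsto_nhdsWithin_of_tendsto_nhds_of_eventually_within
    · have hca : ContinuousAt (fun w : ℝ => w * v / (1 + w + v)) 0 :=
        ContinuousAt.div (by fun_prop) (by fun_prop)
          (by simpa using (by positivity : (0:ℝ) < 1 + 0 + v).ne')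
      have := hca.tendsto.mono_left (nhdsWithin_le_nhds (s := Set.Ioi (0:ℝ)))
      simpa using this
    · filter_upwards [self_mem_nhdsWithin] with w hw
      have hw : (0:ℝ) < w := hw
      have : (0:ℝ) < 1 + w + v := by linarith
      exact Set.mem_Ioi.mpr (by positivity)
  have t4 : Tendsto (fun w : ℝ => RogersR (w / (1 + v)))
      (nhdsWithin 0 (Set.Ioi 0)) (nhds 0) := by
    apply rogersR_tendsto_zero.comp
    apply tendsto_nhdsWithin_of_tendsto_nhds_of_eventually_within
    · have hca : ContinuousAt (fun w : ℝ => w / (1 + v)) 0 :=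
        ContinuousAt.div (by fun_prop) (by fun_prop) h1v.ne'
      have := hca.tendsto.mono_left (nhdsWithin_le_nhds (s := Set.Ioi (0:ℝ)))
      simpa using this
    · filter_upwards [self_mem_nhdsWithin] with w hw
      have hw : (0:ℝ) < w := hw
      exact Set.mem_Ioi.mpr (by positivity)
  have tF : Tendsto F (nhdsWithin 0 (Set.Ioi 0)) (nhds 0) := by
    have := (((t1.add (tendsto_const_nhds (x := RogersR v))).sub t2).sub t3).sub t4
    simpa using this
  have tFu : Tendsto F (nhdsWithin 0 (Set.Ioi 0)) (nhds (F u)) := by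
    apply Filter.Tendsto.congr' _ tendsto_const_nhds
    filter_upwards [Ioc_mem_nhdsGT_of_mem ⟨le_refl (0:ℝ), hu⟩] with w hw
    exact hconst w hw.1 hw.2
  have hFu : F u = 0 := tendsto_nhds_unique tFu tF
  have : RogersR u + RogersR v - RogersR (v / (1 + u))
      - RogersR (u * v / (1 + u + v)) - RogersR (u / (1 + v)) = 0 := hFu
  linarith
end

section
/- If x₁, …, x₅ are positive reals satisfying the A₂ Y-system relations x_i x_{i+2} = 1 + x_{i+1} (indices mod 5), then Σ_{i=1}^{5} ( Li₂(−x_i) + (1/2) ln x_i ln(1+x_i) ) = −π²/2. -/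
open Real MeasureTheory intervalIntegral Set Filter Topology

noncomputable def gg (t : ℝ) : ℝ := if t = 0 then -1 else Real.log (1 - t) / t

lemma gg_contAt {x : ℝ} (hx : x < 1) : ContinuousAt gg x := by
  rcases eq_or_ne x 0 with rfl | hx0
  · have hd : HasDerivAt (fun t : ℝ => Real.log (1 - t)) (-1) 0 := by
      have h1 : HasDerivAt (fun t : ℝ => 1 - t) (-1) 0 := by
        simpa using (hasDerivAt_id (0:ℝ)).const_sub 1
      have := (Real.hasDerivAt_log (by norm_num : (1:ℝ) - 0 ≠ 0)).comp 0 h1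
      exact this.congr_deriv (by norm_num)
    have hslope := hasDerivAt_iff_tendsto_slope.mp hd
    have h2 : Tendsto gg (𝓝[≠] (0:ℝ)) (𝓝 (-1)) := by
      refine hslope.congr' ?_
      filter_upwards [self_mem_nhdsWithin] with t ht
      have ht0 : t ≠ 0 := ht
      simp [slope, gg, ht0, Real.log_one, div_eq_mul_inv, mul_comm]
    have : Tendsto gg (𝓝 (0:ℝ)) (𝓝 (-1)) := by
      rw [← nhdsNE_sup_pure (0:ℝ)]
      refine Tendsto.sup h2 ?_
      simpa [gg] using tendsto_pure_nhds gg 0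
    simpa [ContinuousAt, gg] using this
  · have h1 : ContinuousAt (fun t : ℝ => Real.log (1 - t) / t) x := by
      refine ContinuousAt.div ?_ continuousAt_id hx0
      exact (Real.continuousAt_log (by linarith)).comp ((continuousAt_const).sub continuousAt_id)
    refine h1.congr ?_
    filter_upwards [isOpen_ne.mem_nhds hx0] with t ht
    simp [gg, ht]

lemma gg_contOn {a b : ℝ} (ha : a < 1) (hb : b < 1) : ContinuousOn gg (uIcc a b) := by
  intro t ht
  have h1 : t ≤ max a b := ht.2
  have : t < 1 := lt_of_le_of_lt h1 (max_lt ha hb)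
  exact (gg_contAt this).continuousWithinAt

lemma Li2_eq (x : ℝ) : Li2 x = -∫ t in (0:ℝ)..x, gg t := by
  unfold Li2
  congr 1
  apply intervalIntegral.integral_congr_ae
  have h0 : ∀ᵐ t : ℝ, t ≠ 0 := by
    have : (volume : Measure ℝ) {0} = 0 := measure_singleton 0
    exact ae_iff.mpr (by simpa using this)
  filter_upwards [h0] with t ht _
  simp [gg, ht]

lemma Li2_hasDerivAt {x : ℝ} (hx : x < 1) : HasDerivAt Li2 (-(gg x)) x := by
  have hint : IntervalIntegrable gg volume 0 x :=
    (gg_contOn (by norm_num) hx).intervalIntegrable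
  have hmeas : StronglyMeasurableAtFilter gg (𝓝 x) volume :=
    ContinuousAt.stronglyMeasurableAtFilter (isOpen_Iio) (fun y hy => gg_contAt hy) x hx
  have h2 : HasDerivAt (fun u => -∫ t in (0:ℝ)..u, gg t) (-(gg x)) x :=
    (intervalIntegral.integral_hasDerivAt_right hint hmeas (gg_contAt hx)).neg
  have : Li2 = fun u => -∫ t in (0:ℝ)..u, gg t := funext Li2_eq
  rw [this]; exact h2

lemma Li2_zero : Li2 0 = 0 := by simp [Li2]
-- parts 2-3

-- the series for -log(1-u)/u
lemma hasSum_neg_log (u : ℝ) (h0 : 0 < u) (h1 : u < 1) :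
    HasSum (fun n : ℕ => u ^ n / (n + 1)) (-Real.log (1 - u) / u) := by
  have h := Real.hasSum_pow_div_log_of_abs_lt_one (x := u) (by rw [abs_of_pos h0]; exact h1)
  have h2 := h.div_const u
  refine h2.congr_fun fun n => ?_
  field_simp [h0.ne']
  ring

lemma hasSum_alt_log (u : ℝ) (h0 : 0 < u) (h1 : u < 1) :
    HasSum (fun n : ℕ => (-u) ^ n / (n + 1)) (Real.log (1 + u) / u) := by
  have h := Real.hasSum_pow_div_log_of_abs_lt_one (x := -u) (by rw [abs_neg, abs_of_pos h0]; exact h1)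
  have h2 := h.div_const (-u)
  have h3 : -Real.log (1 - -u) / -u = Real.log (1 + u) / u := by
    rw [sub_neg_eq_add]; rw [neg_div_neg_eq]
  rw [h3] at h2
  refine h2.congr_fun fun n => ?_
  have hu : (-u) ≠ 0 := neg_ne_zero.mpr h0.ne'
  field_simp
  ring

-- alternating zeta(2)
lemma hasSum_alt_zeta : HasSum (fun n : ℕ => (-1 : ℝ) ^ n / (n + 1) ^ 2) (π ^ 2 / 12) := by
  have hz : HasSum (fun n : ℕ => (1 : ℝ) / (n + 1) ^ 2) (π ^ 2 / 6) := by
    have h2 := (hasSum_nat_add_iff (f := fun n : ℕ => (1 : ℝ) / (n : ℝ) ^ 2) 1).mpr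
      (by simpa using hasSum_zeta_two)
    refine h2.congr_fun fun n => by push_cast; ring
  -- odd part
  have hodd : HasSum (fun n : ℕ => (if Odd n then (1 : ℝ) / (n + 1) ^ 2 else 0)) (π ^ 2 / 24) := by
    have hinj : Function.Injective (fun k : ℕ => 2 * k + 1) := fun a b h => by simp only [] at h; omega
    rw [← hinj.hasSum_iff]
    · have : (fun n : ℕ => (if Odd n then (1 : ℝ) / (n + 1) ^ 2 else 0)) ∘ (fun k => 2 * k + 1)
          = fun k : ℕ => (1 / 4) * ((1 : ℝ) / (k + 1) ^ 2) := by
        funext k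
        simp only [Function.comp]
        rw [if_pos ⟨k, by ring⟩]
        push_cast
        field_simp
        ring
      rw [this]
      have := hz.mul_left (1 / 4)
      rw [show π ^ 2 / 24 = 1 / 4 * (π ^ 2 / 6) by ring]
      exact this
    · intro n hn
      rw [if_neg]
      rintro ⟨k, hk⟩
      exact hn ⟨k, by show 2 * k + 1 = n; omega⟩
  have := hz.sub (hodd.mul_left 2)
  have heq : (fun n : ℕ => (1 : ℝ) / (n + 1) ^ 2 - 2 * (if Odd n then (1 : ℝ) / (n + 1) ^ 2 else 0))
      = fun n : ℕ => (-1 : ℝ) ^ n / (n + 1) ^ 2 := by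
    funext n
    rcases Nat.even_or_odd n with he | ho
    · rw [if_neg (by simpa using he), Even.neg_one_pow he]; ring
    · rw [if_pos ho, Odd.neg_one_pow ho]; ring
  rw [heq] at this
  rw [show π ^ 2 / 12 = π ^ 2 / 6 - 2 * (π ^ 2 / 24) by ring]
  exact this

-- integrable bound  2 + 4/sqrt(1-u)  on (0,1)
lemma bound_integrable :
    IntegrableOn (fun u : ℝ => 2 + 4 * (1 - u) ^ (-(1:ℝ)/2)) (Ioo 0 1) := by
  have h1 : IntervalIntegrable (fun x : ℝ => x ^ (-(1:ℝ)/2)) volume 1 0 :=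
    intervalIntegrable_rpow' (by norm_num)
  have h2 : IntervalIntegrable (fun u : ℝ => (1 - u) ^ (-(1:ℝ)/2)) volume 0 1 := by
    have := h1.comp_sub_left 1
    simpa using this
  have h3 : IntervalIntegrable (fun u : ℝ => 2 + 4 * (1 - u) ^ (-(1:ℝ)/2)) volume 0 1 :=
    (_root_.intervalIntegrable_const (c := (2:ℝ))).add (h2.const_mul 4)
  have h4 := h3.1
  rw [integrableOn_Ioc_iff_integrableOn_Ioo] at h4
  exact h4

-- -log x ≤ 2 / sqrt x  for 0 < x (≤1 not needed)
lemma neg_log_le {x : ℝ} (hx : 0 < x) : -Real.log x ≤ 2 * x ^ (-(1:ℝ)/2) := by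
  have hs : (0:ℝ) < x ^ ((1:ℝ)/2) := Real.rpow_pos_of_pos hx _
  have h := Real.log_le_sub_one_of_pos (x := (x ^ ((1:ℝ)/2))⁻¹) (by positivity)
  have hlog : Real.log ((x ^ ((1:ℝ)/2))⁻¹) = -(1/2) * Real.log x := by
    rw [Real.log_inv, Real.log_rpow hx]; ring
  rw [hlog] at h
  have hinv : (x ^ ((1:ℝ)/2))⁻¹ = x ^ (-(1:ℝ)/2) := by
    rw [← Real.rpow_neg hx.le]; norm_num
  rw [hinv] at h
  nlinarith [Real.rpow_pos_of_pos hx (-(1:ℝ)/2)]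

-- partial sums bound
lemma partial_bound (u : ℝ) (h0 : 0 < u) (h1 : u < 1) (N : ℕ) :
    |∑ n ∈ Finset.range N, (-u) ^ n / (n + 1)| ≤ 2 + 4 * (1 - u) ^ (-(1:ℝ)/2) := by
  have habs : |∑ n ∈ Finset.range N, (-u) ^ n / (n + 1)|
      ≤ ∑ n ∈ Finset.range N, u ^ n / (n + 1) := by
    refine (Finset.abs_sum_le_sum_abs _ _).trans (le_of_eq ?_)
    refine Finset.sum_congr rfl fun n _ => ?_
    rw [abs_div, abs_pow, abs_neg, abs_of_pos h0, abs_of_pos (by positivity)]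
  have hsummable : Summable (fun n : ℕ => u ^ n / (n + 1)) :=
    (hasSum_neg_log u h0 h1).summable
  have hle : ∑ n ∈ Finset.range N, u ^ n / (n + 1) ≤ -Real.log (1 - u) / u := by
    rw [← (hasSum_neg_log u h0 h1).tsum_eq]
    exact Summable.sum_le_tsum _ (fun n _ => by positivity) hsummable
  have hD : -Real.log (1 - u) / u ≤ 2 + 4 * (1 - u) ^ (-(1:ℝ)/2) := by
    rcases le_or_gt u (1/2) with hu | hu
    · -- D ≤ 1/(1-u) ≤ 2
      have hgeo : ∑' n : ℕ, u ^ n = (1 - u)⁻¹ := tsum_geometric_of_lt_one h0.le h1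
      have h2 : -Real.log (1 - u) / u ≤ (1 - u)⁻¹ := by
        rw [← (hasSum_neg_log u h0 h1).tsum_eq, ← hgeo]
        refine Summable.tsum_le_tsum (fun n => ?_) hsummable ⟨_, hasSum_geometric_of_lt_one h0.le h1⟩
        rw [div_le_iff₀ (by positivity)]
        nlinarith [pow_nonneg h0.le n, (Nat.cast_nonneg n : (0:ℝ) ≤ n)]
      have h3 : (1 - u)⁻¹ ≤ 2 := by
        rw [inv_le_comm₀ (by linarith) (by norm_num)]; linarith
      have h4 : (0:ℝ) ≤ 4 * (1 - u) ^ (-(1:ℝ)/2) := by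
        have h1u : (0:ℝ) ≤ 1 - u := by linarith
        positivity
      linarith
    · -- 1/u ≤ 2, use neg_log_le
      have hl : -Real.log (1 - u) ≤ 2 * (1 - u) ^ (-(1:ℝ)/2) := neg_log_le (by linarith)
      have hlpos : 0 ≤ -Real.log (1 - u) := by
        simp only [neg_nonneg]
        exact Real.log_nonpos (by linarith) (by linarith)
      have : -Real.log (1 - u) / u ≤ 2 * (-Real.log (1 - u)) := by
        rw [div_le_iff₀ h0]
        nlinarith
      nlinarith
  linarith

lemma integral_log_one_add :
    ∫ u in Ioo (0:ℝ) 1, Real.log (1 + u) / u = π ^ 2 / 12 := by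
  set μ := (volume : Measure ℝ).restrict (Ioo 0 1)
  have key := MeasureTheory.tendsto_integral_of_dominated_convergence
      (μ := μ)
      (F := fun N u => ∑ n ∈ Finset.range N, (-u) ^ n / (n + 1))
      (f := fun u => Real.log (1 + u) / u)
      (bound := fun u => 2 + 4 * (1 - u) ^ (-(1:ℝ)/2))
      (fun N => (Continuous.aestronglyMeasurable (by continuity)))
      bound_integrable
      (fun N => by
        rw [ae_restrict_iff' measurableSet_Ioo]
        filter_upwards with u hu
        simpa using partial_bound u hu.1 hu.2 N)
      (by
        rw [ae_restrict_iff' measurableSet_Ioo]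
        filter_upwards with u hu
        exact (hasSum_alt_log u hu.1 hu.2).tendsto_sum_nat)
  have hFN : ∀ N : ℕ, ∫ u, (∑ n ∈ Finset.range N, (-u) ^ n / (n + 1)) ∂μ
      = ∑ n ∈ Finset.range N, (-1:ℝ) ^ n / (n + 1) ^ 2 := by
    intro N
    rw [MeasureTheory.integral_finset_sum _ (fun n _ => by
      have hc : Continuous (fun u : ℝ => (-u) ^ n / (n + 1)) :=
        ((continuous_neg.pow n).div_const _)
      exact (hc.integrableOn_Icc (a := 0) (b := 1)).mono_set Ioo_subset_Icc_self)]
    refine Finset.sum_congr rfl fun n _ => ?_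
    have hrw : ∀ u : ℝ, (-u) ^ n / (n + 1) = ((-1:ℝ) ^ n / (n + 1)) * u ^ n := by
      intro u; rw [neg_pow]; ring
    rw [MeasureTheory.integral_congr_ae (Filter.EventuallyEq.of_eq (funext hrw)),
      MeasureTheory.integral_const_mul]
    have : ∫ u in Ioo (0:ℝ) 1, u ^ n = 1 / (n + 1) := by
      rw [← MeasureTheory.integral_Ioc_eq_integral_Ioo,
        ← intervalIntegral.integral_of_le zero_le_one, integral_pow]
      norm_num
    rw [this]
    have hn : ((n:ℝ)+1) ≠ 0 := by positivity
    field_simp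
  have halt := hasSum_alt_zeta.tendsto_sum_nat
  have hfin := tendsto_nhds_unique (key.congr hFN) halt
  simpa using hfin

lemma Li2_neg_one : Li2 (-1) = -(π ^ 2 / 12) := by
  rw [Li2_eq]
  have h1 : ∫ t in (0:ℝ)..(-1), gg t = -∫ t in (-1:ℝ)..0, gg t :=
    (intervalIntegral.integral_symm _ _)
  rw [h1, neg_neg]
  have h2 : ∫ t in (-1:ℝ)..0, gg t = ∫ x in (0:ℝ)..1, gg (-x) := by
    rw [intervalIntegral.integral_comp_neg gg]
    norm_num
  rw [h2]
  have h3 : ∫ x in (0:ℝ)..1, gg (-x) = ∫ x in Ioo (0:ℝ) 1, gg (-x) := by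
    rw [intervalIntegral.integral_of_le zero_le_one, MeasureTheory.integral_Ioc_eq_integral_Ioo]
  rw [h3]
  have h4 : ∫ x in Ioo (0:ℝ) 1, gg (-x) = ∫ x in Ioo (0:ℝ) 1, -(Real.log (1 + x) / x) := by
    refine MeasureTheory.setIntegral_congr_fun measurableSet_Ioo fun x hx => ?_
    have hx0 : -x ≠ 0 := by simp [hx.1.ne']
    simp only [gg, if_neg hx0]
    rw [sub_neg_eq_add, div_neg]
  rw [h4, MeasureTheory.integral_neg, integral_log_one_add]


lemma Li2_hasDerivAt' {x : ℝ} (hx : x < 1) :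
    HasDerivAt Li2 (-(if x = 0 then -1 else Real.log (1 - x) / x)) x := by
  simpa [gg] using Li2_hasDerivAt hx

noncomputable def ff (x : ℝ) : ℝ := Li2 (-x) + 1/2 * Real.log x * Real.log (1+x)

lemma ff_hasDerivAt {x : ℝ} (hx : 0 < x) :
    HasDerivAt ff ((Real.log x/(1+x) - Real.log (1+x)/x)/2) x := by
  have h1x : (0:ℝ) < 1 + x := by linarith
  have houter := Li2_hasDerivAt' (x := -x) (by linarith)
  have hne : -x ≠ 0 := by simp [hx.ne']
  rw [if_neg hne] at houter
  have hinner : HasDerivAt (fun y : ℝ => -y) (-1) x := by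
    exact (hasDerivAt_id x).neg
  have h1 : HasDerivAt (fun y => Li2 (-y))
      (-(Real.log (1 - -x) / -x) * (-1)) x := houter.comp x hinner
  have hlog : HasDerivAt Real.log x⁻¹ x := Real.hasDerivAt_log hx.ne'
  have hlog1p : HasDerivAt (fun y : ℝ => Real.log (1 + y)) (1 + x)⁻¹ x := by
    have hi : HasDerivAt (fun y : ℝ => 1 + y) 1 x := by simpa using (hasDerivAt_id x).const_add 1
    exact ((Real.hasDerivAt_log h1x.ne').comp x hi).congr_deriv (by simp)
  have h2 : HasDerivAt (fun y => 1/2 * Real.log y * Real.log (1+y))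
      ((1/2 * x⁻¹) * Real.log (1+x) + (1/2 * Real.log x) * (1+x)⁻¹) x :=
    ((hlog.const_mul (1/2)).mul hlog1p)
  have H := h1.add h2
  refine H.congr_deriv ?_
  rw [sub_neg_eq_add]
  field_simp
  ring

lemma const_on_Ioi {F : ℝ → ℝ} (h : ∀ x ∈ Ioi (0:ℝ), HasDerivAt F 0 x)
    {a b : ℝ} (ha : 0 < a) (hb : 0 < b) : F a = F b := by
  have key : ∀ u v : ℝ, 0 < u → u ≤ v → F v = F u := by
    intro u v hu huv
    refine constant_of_has_deriv_right_zero (fun x hx => ?_) (fun x hx => ?_) v ⟨huv, le_rfl⟩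
    · exact (h x (lt_of_lt_of_le hu hx.1)).continuousAt.continuousWithinAt
    · exact (h x (lt_of_lt_of_le hu hx.1)).hasDerivWithinAt
  rcases le_total a b with hab | hab
  · exact (key a b ha hab).symm
  · exact key b a hb hab

lemma ff_add_inv {y : ℝ} (hy : 0 < y) : ff y + ff (1/y) = -(π^2/6) := by
  have h : ∀ x ∈ Ioi (0:ℝ), HasDerivAt (fun y => ff y + ff (1/y)) 0 x := by
    intro x hx
    have hx' : (0:ℝ) < x := hx
    have h1x : (0:ℝ) < 1 + x := by linarith
    have hixpos : (0:ℝ) < 1/x := by positivity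
    have hinner : HasDerivAt (fun y : ℝ => 1/y) (-(x^2)⁻¹) x := by
      simpa [one_div] using (hasDerivAt_inv hx'.ne')
    have h2 := ((ff_hasDerivAt hixpos).comp x hinner)
    have H := (ff_hasDerivAt hx').add h2
    refine H.congr_deriv ?_
    have e1 : (1:ℝ) + 1/x = (1+x)/x := by
      rw [eq_div_iff hx'.ne', add_mul, one_mul, one_div, inv_mul_cancel₀ hx'.ne']; exact add_comm x 1
    rw [e1, Real.log_div h1x.ne' hx'.ne', Real.log_div one_ne_zero hx'.ne', Real.log_one]
    field_simp
    ring
  have := const_on_Ioi h hy one_pos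
  rw [this]
  norm_num [ff, Li2_neg_one]
  ring

lemma ff_tendsto_zero : Tendsto ff (𝓝[>] (0:ℝ)) (𝓝 0) := by
  have hLi : Tendsto (fun x => Li2 (-x)) (𝓝[>] (0:ℝ)) (𝓝 0) := by
    have hc : ContinuousAt Li2 0 := (Li2_hasDerivAt' (by norm_num)).continuousAt
    have hneg : Tendsto (fun x : ℝ => -x) (𝓝[>] (0:ℝ)) (𝓝 0) := by
      simpa using (continuous_neg.tendsto (0:ℝ)).mono_left nhdsWithin_le_nhds
    have := hc.tendsto.comp hneg
    rw [Li2_zero] at this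
    exact this
  have hlogterm : Tendsto (fun x => 1/2 * Real.log x * Real.log (1+x)) (𝓝[>] (0:ℝ)) (𝓝 0) := by
    have hx1 : Tendsto (fun x : ℝ => Real.log x * x ^ (1:ℝ)) (𝓝[>] (0:ℝ)) (𝓝 0) :=
      tendsto_log_mul_rpow_nhdsGT_zero one_pos
    have hgnorm : Tendsto (fun x : ℝ => |Real.log x| * |x|) (𝓝[>] (0:ℝ)) (𝓝 0) := by
      simpa [Real.rpow_one] using hx1.norm
    refine squeeze_zero_norm' ?_ hgnorm
    filter_upwards [Ioo_mem_nhdsGT_of_mem (left_mem_Ico.mpr one_pos)] with x hx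
    have hx0 : (0:ℝ) < x := hx.1
    have hlx : 0 ≤ Real.log (1+x) := Real.log_nonneg (by linarith)
    have hup : Real.log (1+x) ≤ x := by
      have := Real.log_le_sub_one_of_pos (x := 1+x) (by linarith)
      linarith
    have hbnd : |Real.log (1+x)| ≤ |x| := by
      rw [abs_of_nonneg hlx, abs_of_pos hx0]; exact hup
    have h12 : |(1:ℝ)/2| ≤ 1 := by rw [abs_of_pos] <;> norm_num
    calc ‖1/2 * Real.log x * Real.log (1+x)‖
        = |1/2| * |Real.log x| * |Real.log (1+x)| := by
          rw [Real.norm_eq_abs, abs_mul, abs_mul]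
      _ ≤ 1 * |Real.log x| * |x| := by gcongr
      _ = |Real.log x| * |x| := by ring
  have h := hLi.add hlogterm
  unfold ff
  simpa using h

noncomputable def Phi (b s : ℝ) : ℝ :=
  ff s + ff b + ff ((1+b)/s) + ff ((1+b+s)/(s*b)) + ff ((1+s)/b)

lemma Phi_hasDeriv {b : ℝ} (hb : 0 < b) : ∀ s ∈ Ioi (0:ℝ), HasDerivAt (Phi b) 0 s := by
  intro s hs
  have hs' : (0:ℝ) < s := hs
  have hsne := hs'.ne'
  have hbne := hb.ne'
  have h1b : (0:ℝ) < 1 + b := by linarith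
  have h1s : (0:ℝ) < 1 + s := by linarith
  have h1bs : (0:ℝ) < 1 + b + s := by linarith
  -- inner derivatives
  have i3 : HasDerivAt (fun s : ℝ => (1+b)/s) (-((1+b)/s^2)) s := by
    have := (hasDerivAt_inv hsne).const_mul (1+b)
    simpa [div_eq_mul_inv, neg_div, mul_comm, mul_div_assoc] using this
  have i4 : HasDerivAt (fun s : ℝ => (1+b+s)/(s*b))
      ((1*(s*b) - (1+b+s)*b)/(s*b)^2) s := by
    have hu : HasDerivAt (fun s : ℝ => 1+b+s) 1 s := by
      simpa using (hasDerivAt_id s).const_add (1+b)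
    have hv : HasDerivAt (fun s : ℝ => s*b) b s := by
      simpa using (hasDerivAt_id s).mul_const b
    exact hu.div hv (by positivity)
  have i5 : HasDerivAt (fun s : ℝ => (1+s)/b) (1/b) s := by
    have hu : HasDerivAt (fun s : ℝ => 1+s) 1 s := by
      simpa using (hasDerivAt_id s).const_add 1
    simpa using hu.div_const b
  have h3 := (ff_hasDerivAt (by positivity : (0:ℝ) < (1+b)/s)).comp s i3
  have h4 := (ff_hasDerivAt (by positivity : (0:ℝ) < (1+b+s)/(s*b))).comp s i4
  have h5 := (ff_hasDerivAt (by positivity : (0:ℝ) < (1+s)/b)).comp s i5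
  have H := ((((ff_hasDerivAt hs').add (hasDerivAt_const s (ff b))).add h3).add h4).add h5
  have hPhi : HasDerivAt (Phi b) _ s := H
  convert hPhi using 1
  -- now prove 0 = big expression
  have e3 : (1:ℝ) + (1+b)/s = (1+b+s)/s := by
    field_simp; ring
  have e4 : (1:ℝ) + (1+b+s)/(s*b) = ((1+s)*(1+b))/(s*b) := by
    field_simp; ring
  have e5 : (1:ℝ) + (1+s)/b = (1+b+s)/b := by
    field_simp; ring
  rw [e3, e4, e5]
  rw [Real.log_div h1b.ne' hsne, Real.log_div h1bs.ne' hsne,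
    Real.log_div h1bs.ne' (by positivity : s*b ≠ 0),
    Real.log_div (by positivity : (1+s)*(1+b) ≠ 0) (by positivity : s*b ≠ 0),
    Real.log_div h1s.ne' hbne, Real.log_div h1bs.ne' hbne,
    Real.log_mul hsne hbne, Real.log_mul h1s.ne' h1b.ne']
  have d3 : (1:ℝ)+b+s ≠ 0 := h1bs.ne'
  have d1s : (1:ℝ)+s ≠ 0 := h1s.ne'
  have d1b : (1:ℝ)+b ≠ 0 := h1b.ne'
  field_simp
  ring

lemma tendsto_ff_comp {u : ℝ → ℝ} (hu : Tendsto u (𝓝[>] (0:ℝ)) (𝓝 0))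
    (hpos : ∀ᶠ s in 𝓝[>] (0:ℝ), 0 < u s) :
    Tendsto (fun s => ff (u s)) (𝓝[>] (0:ℝ)) (𝓝 0) := by
  have : Tendsto u (𝓝[>] (0:ℝ)) (𝓝[>] (0:ℝ)) :=
    tendsto_nhdsWithin_iff.mpr ⟨hu, hpos⟩
  exact ff_tendsto_zero.comp this

lemma Phi_tendsto {b : ℝ} (hb : 0 < b) :
    Tendsto (Phi b) (𝓝[>] (0:ℝ)) (𝓝 (-(π^2/2))) := by
  have h1b : (0:ℝ) < 1 + b := by linarith
  have hbne := hb.ne'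
  -- rewrite Phi on the filter
  have heq : ∀ᶠ s in 𝓝[>] (0:ℝ), Phi b s =
      ff s + ff b - (π^2/6) - ff (s/(1+b)) - (π^2/6) - ff ((s*b)/(1+b+s)) + ff ((1+s)/b) := by
    filter_upwards [self_mem_nhdsWithin] with s hs
    have hs' : (0:ℝ) < s := hs
    have h1bs : (0:ℝ) < 1 + b + s := by linarith
    have hi3 := ff_add_inv (y := (1+b)/s) (by positivity)
    have hi4 := ff_add_inv (y := (1+b+s)/(s*b)) (by positivity)
    rw [one_div_div] at hi3 hi4
    unfold Phi
    linarith
  rw [tendsto_congr' heq]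
  have t1 : Tendsto (fun s : ℝ => ff s) (𝓝[>] (0:ℝ)) (𝓝 0) := ff_tendsto_zero
  have t3 : Tendsto (fun s : ℝ => ff (s/(1+b))) (𝓝[>] (0:ℝ)) (𝓝 0) := by
    refine tendsto_ff_comp ?_ ?_
    · have : Tendsto (fun s : ℝ => s/(1+b)) (𝓝 (0:ℝ)) (𝓝 (0/(1+b))) :=
        (continuous_id.div_const (1+b)).tendsto 0
      simpa using this.mono_left nhdsWithin_le_nhds
    · filter_upwards [self_mem_nhdsWithin] with s hs
      exact div_pos hs h1b
  have t4 : Tendsto (fun s : ℝ => ff ((s*b)/(1+b+s))) (𝓝[>] (0:ℝ)) (𝓝 0) := by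
    refine tendsto_ff_comp ?_ ?_
    · have hc : ContinuousAt (fun s : ℝ => (s*b)/(1+b+s)) 0 := by
        apply ContinuousAt.div
        · exact (continuous_id.mul continuous_const).continuousAt
        · exact (continuous_const.add continuous_id).continuousAt
        · simpa using h1b.ne'
      have := hc.tendsto.mono_left (nhdsWithin_le_nhds (s := Ioi (0:ℝ)))
      simpa using this
    · filter_upwards [self_mem_nhdsWithin] with s hs
      have hs' : (0:ℝ) < s := hs
      have : (0:ℝ) < 1 + b + s := by linarith
      positivity
  have t5 : Tendsto (fun s : ℝ => ff ((1+s)/b)) (𝓝[>] (0:ℝ)) (𝓝 (ff (1/b))) := by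
    have hcf : ContinuousAt ff (1/b) := (ff_hasDerivAt (by positivity)).continuousAt
    have harg : Tendsto (fun s : ℝ => (1+s)/b) (𝓝[>] (0:ℝ)) (𝓝 (1/b)) := by
      have : ContinuousAt (fun s : ℝ => (1+s)/b) 0 :=
        ((continuous_const.add continuous_id).div_const b).continuousAt
      have h := this.tendsto.mono_left (nhdsWithin_le_nhds (s := Ioi (0:ℝ)))
      simpa using h
    exact hcf.tendsto.comp harg
  have t2 : Tendsto (fun _ : ℝ => ff b) (𝓝[>] (0:ℝ)) (𝓝 (ff b)) := tendsto_const_nhds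
  have tc : Tendsto (fun _ : ℝ => π^2/6) (𝓝[>] (0:ℝ)) (𝓝 (π^2/6)) := tendsto_const_nhds
  have hsum := (((((t1.add t2).sub tc).sub t3).sub tc).sub t4).add t5
  have hval : 0 + ff b - π^2/6 - 0 - π^2/6 - 0 + ff (1/b) = -(π^2/2) := by
    have := ff_add_inv hb
    linarith
  rw [hval] at hsum
  exact hsum
  
lemma Phi_value {b : ℝ} (hb : 0 < b) {s : ℝ} (hs : 0 < s) : Phi b s = -(π^2/2) := by
  have hconst : ∀ s' ∈ Ioi (0:ℝ), Phi b s' = Phi b s := fun s' hs' =>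
    const_on_Ioi (Phi_hasDeriv hb) hs' hs
  have hc : Tendsto (Phi b) (𝓝[>] (0:ℝ)) (𝓝 (Phi b s)) := by
    refine Tendsto.congr' ?_ tendsto_const_nhds
    filter_upwards [self_mem_nhdsWithin] with s' hs'
    exact (hconst s' hs').symm
  exact tendsto_nhds_unique hc (Phi_tendsto hb)


/-- If positive reals `x₁,…,x₅` satisfy the A₂ Y-system relations (indices mod 5), then
`Σᵢ (Li₂(-xᵢ) + (1/2) log xᵢ log(1+xᵢ)) = -π²/2`. -/
theorem ysystem_dilog_sum (x₁ x₂ x₃ x₄ x₅ : ℝ)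
    (h₁ : 0 < x₁) (h₂ : 0 < x₂) (h₃ : 0 < x₃) (h₄ : 0 < x₄) (h₅ : 0 < x₅)
    (e₁ : x₁ * x₃ = 1 + x₂) (e₂ : x₂ * x₄ = 1 + x₃) (e₃ : x₃ * x₅ = 1 + x₄)
    (e₄ : x₄ * x₁ = 1 + x₅) (e₅ : x₅ * x₂ = 1 + x₁) :
    (Li2 (-x₁) + (1 / 2) * Real.log x₁ * Real.log (1 + x₁)) +
    (Li2 (-x₂) + (1 / 2) * Real.log x₂ * Real.log (1 + x₂)) +
    (Li2 (-x₃) + (1 / 2) * Real.log x₃ * Real.log (1 + x₃)) +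
    (Li2 (-x₄) + (1 / 2) * Real.log x₄ * Real.log (1 + x₄)) +
    (Li2 (-x₅) + (1 / 2) * Real.log x₅ * Real.log (1 + x₅)) = -(Real.pi ^ 2 / 2) := by
  have hx1 := h₁.ne'
  have hx2 := h₂.ne'
  have h3 : x₃ = (1+x₂)/x₁ := by
    rw [eq_div_iff hx1]; linear_combination e₁
  have h4 : x₄ = (1+x₂+x₁)/(x₁*x₂) := by
    rw [eq_div_iff (by positivity)]; linear_combination x₁ * e₂ + e₁
  have h5 : x₅ = (1+x₁)/x₂ := by
    rw [eq_div_iff hx2]; linear_combination e₅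
  have hgoal : ff x₁ + ff x₂ + ff x₃ + ff x₄ + ff x₅ = -(Real.pi ^ 2 / 2) := by
    rw [h3, h4, h5]
    have hv := Phi_value h₂ h₁
    unfold Phi at hv
    exact hv
  simpa [ff] using hgoal
end

section
/- Euler's product formula for the q-exponential: for complex q with |q| < 1 and any complex x, 1 + Σ_{n≥1} q^{n(n−1)/2} xⁿ / ((q^{−1}−q)(q^{−2}−q²)⋯(q^{−n}−qⁿ)) = Π_{n≥0} (1 + q^{2n+1} x). -/
open Filter Finset Topology

noncomputable def qA (q : ℂ) (n : ℕ) : ℂ :=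
  q ^ (n * (n - 1) / 2) / ∏ k ∈ Finset.range n, (q ^ (-(k + 1 : ℤ)) - q ^ (k + 1))

lemma tri (n : ℕ) : (n + 1) * n / 2 = n * (n - 1) / 2 + n := by
  cases n with
  | zero => simp
  | succ m =>
    obtain ⟨a, ha⟩ := Nat.even_mul_succ_self m
    have h1 : (m + 1 + 1) * (m + 1) = 2 * (a + (m + 1)) := by
      rw [show (m + 1 + 1) * (m + 1) = m * (m + 1) + 2 * (m + 1) by ring, ha]; ring
    have h2 : (m + 1) * (m + 1 - 1) = 2 * a := by
      simp [Nat.mul_comm, ha, two_mul]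
    rw [h1, h2, Nat.mul_div_cancel_left _ two_pos, Nat.mul_div_cancel_left _ two_pos]

section main
variable {q : ℂ} (hq0 : q ≠ 0) (hq : ‖q‖ < 1)

lemma qzpow (k : ℕ) : q ^ (-(k + 1 : ℤ)) = (q ^ (k + 1))⁻¹ := by
  have : (-(k + 1 : ℤ)) = -((k + 1 : ℕ) : ℤ) := by push_cast; ring
  rw [this, zpow_neg, zpow_natCast]

include hq0 hq

lemma qd_ne (k : ℕ) : q ^ (-(k + 1 : ℤ)) - q ^ (k + 1) ≠ 0 := by
  rw [qzpow]
  set w := q ^ (k + 1) with hwdef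
  have hw0 : w ≠ 0 := pow_ne_zero _ hq0
  have hwlt : ‖w‖ < 1 := by
    rw [hwdef, norm_pow]
    exact pow_lt_one₀ (norm_nonneg q) hq (Nat.succ_ne_zero k)
  intro h
  have h2 : w⁻¹ = w := sub_eq_zero.mp h
  have h1 : w * w = 1 := by
    nth_rewrite 1 [← h2]; exact inv_mul_cancel₀ hw0
  have := congrArg norm h1
  rw [norm_mul, norm_one] at this
  nlinarith [norm_nonneg w]

lemma qP_ne (n : ℕ) : ∏ k ∈ Finset.range n, (q ^ (-(k + 1 : ℤ)) - q ^ (k + 1)) ≠ 0 :=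
  Finset.prod_ne_zero_iff.mpr fun k _ => qd_ne hq0 hq k

omit hq in
lemma qd_mul (k : ℕ) : (q ^ (-(k + 1 : ℤ)) - q ^ (k + 1)) * q ^ (k + 1) = 1 - q ^ (2 * (k + 1)) := by
  rw [qzpow, sub_mul, inv_mul_cancel₀ (pow_ne_zero _ hq0)]
  ring

lemma one_sub_qpow_ne (n : ℕ) : (1 : ℂ) - q ^ (2 * (n + 1)) ≠ 0 := by
  rw [← qd_mul hq0]
  exact mul_ne_zero (qd_ne hq0 hq n) (pow_ne_zero _ hq0)

lemma qA_rec (n : ℕ) : qA q (n + 1) * (1 - q ^ (2 * (n + 1))) = qA q n * q ^ (2 * n + 1) := by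
  have hd := qd_ne hq0 hq n
  have hP := qP_ne hq0 hq n
  rw [qA, qA, Finset.prod_range_succ]
  simp only [Nat.add_sub_cancel]
  rw [tri, ← qd_mul hq0 n, pow_add]
  set d := q ^ (-(n + 1 : ℤ)) - q ^ (n + 1) with hdd
  set P := ∏ k ∈ Finset.range n, (q ^ (-(k + 1 : ℤ)) - q ^ (k + 1)) with hPP
  field_simp
  ring

lemma qA_succ (n : ℕ) : qA q (n + 1) = qA q n * q ^ (2 * n + 1) / (1 - q ^ (2 * (n + 1))) := by
  rw [eq_div_iff (one_sub_qpow_ne hq0 hq n)]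
  exact qA_rec hq0 hq n

omit hq0 in
lemma qnorm_lt : ‖q‖ < 1 := hq

omit hq0 in
lemma qden_lb (n : ℕ) : 1 - ‖q‖ ^ 2 ≤ ‖(1 : ℂ) - q ^ (2 * (n + 1))‖ := by
  have h1 : ‖q ^ (2 * (n + 1))‖ ≤ ‖q‖ ^ 2 := by
    rw [norm_pow]
    exact pow_le_pow_of_le_one (norm_nonneg q) (qnorm_lt hq).le (by omega)
  calc 1 - ‖q‖ ^ 2 ≤ 1 - ‖q ^ (2 * (n + 1))‖ := by linarith
    _ ≤ ‖(1 : ℂ) - q ^ (2 * (n + 1))‖ := by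
        have := norm_sub_norm_le (1 : ℂ) (q ^ (2 * (n + 1)))
        simpa using this

omit hq0 in
lemma qratio_tendsto (t : ℂ) :
    Tendsto (fun n : ℕ => ‖q ^ (2 * n + 1) * t / (1 - q ^ (2 * (n + 1)))‖) atTop (𝓝 0) := by
  have hc : 0 < 1 - ‖q‖ ^ 2 := by
    have := qnorm_lt hq
    nlinarith [norm_nonneg q]
  apply squeeze_zero (fun n => norm_nonneg _) (g := fun n => ‖q‖ ^ n * (‖q‖ * ‖t‖ / (1 - ‖q‖ ^ 2)))
  · intro n
    rw [norm_div, norm_mul, norm_pow]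
    have h1 : ‖q‖ ^ (2 * n + 1) ≤ ‖q‖ ^ n * ‖q‖ := by
      rw [← pow_succ]
      exact pow_le_pow_of_le_one (norm_nonneg q) (qnorm_lt hq).le (by omega)
    have h2 := qden_lb hq (n := n)
    rw [div_le_iff₀ (lt_of_lt_of_le hc h2)]
    have hb : ‖q‖ ^ n * (‖q‖ * ‖t‖ / (1 - ‖q‖ ^ 2)) * ‖(1:ℂ) - q ^ (2 * (n + 1))‖ ≥
        ‖q‖ ^ n * (‖q‖ * ‖t‖ / (1 - ‖q‖ ^ 2)) * (1 - ‖q‖ ^ 2) := by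
      apply mul_le_mul_of_nonneg_left h2
      positivity
    have : ‖q‖ ^ n * (‖q‖ * ‖t‖ / (1 - ‖q‖ ^ 2)) * (1 - ‖q‖ ^ 2) = ‖q‖ ^ n * ‖q‖ * ‖t‖ := by
      rw [← mul_div_assoc, div_mul_cancel₀ _ hc.ne']
      ring
    nlinarith [norm_nonneg t, pow_nonneg (norm_nonneg q) n]
  · simpa using (tendsto_pow_atTop_nhds_zero_of_lt_one (norm_nonneg q) (qnorm_lt hq)).mul_const _

lemma qsummable_norm (t : ℂ) : Summable (fun n => ‖qA q n * t ^ n‖) := by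
  apply summable_of_ratio_norm_eventually_le (r := 1 / 2) (by norm_num)
  have hev := (qratio_tendsto hq t).eventually_lt_const (by norm_num : (0:ℝ) < 1/2)
  filter_upwards [hev] with n hn
  rw [norm_norm, norm_norm]
  have hfac : qA q (n + 1) * t ^ (n + 1) =
      (qA q n * t ^ n) * (q ^ (2 * n + 1) * t / (1 - q ^ (2 * (n + 1)))) := by
    rw [qA_succ hq0 hq n]
    field_simp
    ring
  rw [hfac, norm_mul, mul_comm (1/2 : ℝ)]
  exact mul_le_mul_of_nonneg_left hn.le (norm_nonneg _)

lemma qsummable (t : ℂ) : Summable (fun n => qA q n * t ^ n) :=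
  (qsummable_norm hq0 hq t).of_norm


omit hq0 hq in
lemma qA_zero : qA q 0 = 1 := by simp [qA]

lemma qtail (u : ℂ) :
    ∑' n : ℕ, qA q (n + 1) * u ^ (n + 1) = (∑' n : ℕ, qA q n * u ^ n) - 1 := by
  have h := Summable.tsum_eq_zero_add (qsummable hq0 hq u)
  rw [h, qA_zero]
  simp

lemma qshift_summable (u : ℂ) : Summable (fun n : ℕ => qA q (n + 1) * u ^ (n + 1)) :=
  ((summable_nat_add_iff (f := fun n : ℕ => qA q n * u ^ n) 1).mpr (qsummable hq0 hq u)).congr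
    (fun n => rfl)

lemma qS_funeq (t : ℂ) :
    (∑' n : ℕ, qA q n * t ^ n) = (1 + q * t) * ∑' n : ℕ, qA q n * (q ^ 2 * t) ^ n := by
  have key : ∀ n : ℕ, q * t * (qA q n * (q ^ 2 * t) ^ n) =
      qA q (n + 1) * t ^ (n + 1) - qA q (n + 1) * (q ^ 2 * t) ^ (n + 1) := by
    intro n
    have h := qA_rec hq0 hq n
    have e1 : (q ^ 2 * t) ^ n = q ^ (2 * n) * t ^ n := by rw [mul_pow, ← pow_mul]
    have e2 : (q ^ 2 * t) ^ (n + 1) = q ^ (2 * (n + 1)) * t ^ (n + 1) := by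
      rw [mul_pow, ← pow_mul]
    rw [e1, e2]
    have e3 : qA q (n + 1) * t ^ (n + 1) - qA q (n + 1) * (q ^ (2 * (n + 1)) * t ^ (n + 1)) =
        qA q (n + 1) * (1 - q ^ (2 * (n + 1))) * t ^ (n + 1) := by ring
    rw [e3, h]
    ring
  have h2 : q * t * (∑' n : ℕ, qA q n * (q ^ 2 * t) ^ n) =
      (∑' n : ℕ, qA q n * t ^ n) - (∑' n : ℕ, qA q n * (q ^ 2 * t) ^ n) := by
    rw [← tsum_mul_left]
    calc ∑' n : ℕ, q * t * (qA q n * (q ^ 2 * t) ^ n)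
        = ∑' n : ℕ, (qA q (n + 1) * t ^ (n + 1) - qA q (n + 1) * (q ^ 2 * t) ^ (n + 1)) :=
          tsum_congr key
      _ = (∑' n : ℕ, qA q (n + 1) * t ^ (n + 1)) -
            ∑' n : ℕ, qA q (n + 1) * (q ^ 2 * t) ^ (n + 1) :=
          Summable.tsum_sub (qshift_summable hq0 hq t) (qshift_summable hq0 hq (q ^ 2 * t))
      _ = ((∑' n : ℕ, qA q n * t ^ n) - 1) - ((∑' n : ℕ, qA q n * (q ^ 2 * t) ^ n) - 1) := by
          rw [qtail hq0 hq t, qtail hq0 hq (q ^ 2 * t)]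
      _ = (∑' n : ℕ, qA q n * t ^ n) - ∑' n : ℕ, qA q n * (q ^ 2 * t) ^ n := by ring
  linear_combination -h2

lemma qS_iter (x : ℂ) (N : ℕ) :
    (∑' n : ℕ, qA q n * x ^ n) =
      (∏ k ∈ Finset.range N, (1 + q ^ (2 * k + 1) * x)) *
        ∑' n : ℕ, qA q n * (q ^ (2 * N) * x) ^ n := by
  induction N with
  | zero => simp
  | succ N ih =>
    rw [ih, qS_funeq hq0 hq (q ^ (2 * N) * x), Finset.prod_range_succ]
    have e1 : q * (q ^ (2 * N) * x) = q ^ (2 * N + 1) * x := by ring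
    have e2 : q ^ 2 * (q ^ (2 * N) * x) = q ^ (2 * (N + 1)) * x := by ring
    rw [e1, e2]
    ring

lemma qS_sub_one_bound (x : ℂ) (N : ℕ) :
    ‖(∑' n : ℕ, qA q n * (q ^ (2 * N) * x) ^ n) - 1‖ ≤
      ‖q‖ ^ (2 * N) * ∑' n : ℕ, ‖qA q (n + 1) * x ^ (n + 1)‖ := by
  rw [← qtail hq0 hq]
  have hsn : ∀ u : ℂ, Summable (fun n : ℕ => ‖qA q (n + 1) * u ^ (n + 1)‖) := fun u =>
    ((summable_nat_add_iff (f := fun n : ℕ => ‖qA q n * u ^ n‖) 1).mpr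
      (qsummable_norm hq0 hq u)).congr (fun n => rfl)
  refine le_trans (norm_tsum_le_tsum_norm (hsn _)) ?_
  rw [← tsum_mul_left]
  refine Summable.tsum_le_tsum ?_ (hsn _) ((hsn x).mul_left _)
  intro n
  have e : qA q (n + 1) * (q ^ (2 * N) * x) ^ (n + 1) =
      q ^ (2 * N) * (q ^ (2 * N)) ^ n * (qA q (n + 1) * x ^ (n + 1)) := by ring
  rw [e, norm_mul, norm_mul, norm_pow]
  have h1 : ‖q ^ (2 * N)‖ ^ n ≤ 1 := by
    apply pow_le_one₀ (norm_nonneg _)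
    rw [norm_pow]
    exact pow_le_one₀ (norm_nonneg _) (qnorm_lt hq).le
  rw [norm_pow]
  have h2 := mul_le_mul_of_nonneg_right
    (mul_le_mul_of_nonneg_left h1 (pow_nonneg (norm_nonneg q) (2 * N)))
    (norm_nonneg (qA q (n + 1) * x ^ (n + 1)))
  simpa using h2

omit hq0 in
lemma qsq_lt : ‖q‖ ^ 2 < 1 := by nlinarith [qnorm_lt hq, norm_nonneg q]

lemma qS_tendsto_one (x : ℂ) :
    Tendsto (fun N : ℕ => ∑' n : ℕ, qA q n * (q ^ (2 * N) * x) ^ n) atTop (𝓝 1) := by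
  rw [tendsto_iff_norm_sub_tendsto_zero]
  apply squeeze_zero (fun N => norm_nonneg _) (fun N => qS_sub_one_bound hq0 hq x N)
  have h := (tendsto_pow_atTop_nhds_zero_of_lt_one (by positivity) (qsq_lt hq)).mul_const
    (∑' n : ℕ, ‖qA q (n + 1) * x ^ (n + 1)‖)
  simpa [pow_mul] using h

end main

/-- Euler's product formula for the q-exponential: for `0 < |q| < 1` and any `x ∈ ℂ`,
`1 + Σ_{n≥1} q^{n(n-1)/2} xⁿ / ((q⁻¹-q)⋯(q⁻ⁿ-qⁿ)) = Π_{n≥0} (1 + q^{2n+1} x)`. -/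
theorem qExp_sum_eq_prod (q x : ℂ) (hq0 : q ≠ 0) (hq : ‖q‖ < 1) :
    1 + ∑' m : ℕ, q ^ ((m + 1) * m / 2) * x ^ (m + 1) /
        ∏ k ∈ Finset.range (m + 1), (q ^ (-(k + 1 : ℤ)) - q ^ (k + 1)) =
      ∏' n : ℕ, (1 + q ^ (2 * n + 1) * x) := by
  have hS : (∑' n : ℕ, qA q n * x ^ n) =
      1 + ∑' m : ℕ, q ^ ((m + 1) * m / 2) * x ^ (m + 1) /
        ∏ k ∈ Finset.range (m + 1), (q ^ (-(k + 1 : ℤ)) - q ^ (k + 1)) := by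
    rw [Summable.tsum_eq_zero_add (qsummable hq0 hq x)]
    congr 1
    · simp [qA_zero]
    · apply tsum_congr
      intro m
      rw [qA]
      simp only [Nat.add_sub_cancel]
      ring
  rw [← hS]
  set f : ℕ → ℂ := fun n => 1 + q ^ (2 * n + 1) * x with hf
  have heq : ∀ n : ℕ, ‖q ^ (2 * n + 1) * x‖ = (‖q‖ ^ 2) ^ n * (‖q‖ * ‖x‖) := by
    intro n
    rw [norm_mul, norm_pow, ← pow_mul]
    ring
  have hT : Tendsto (fun n : ℕ => ‖q ^ (2 * n + 1) * x‖) atTop (𝓝 0) := by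
    have h := (tendsto_pow_atTop_nhds_zero_of_lt_one (by positivity) (qsq_lt hq)).mul_const
      (‖q‖ * ‖x‖)
    rw [show (0:ℝ) = 0 * (‖q‖ * ‖x‖) by ring]
    exact Filter.Tendsto.congr (fun n => (heq n).symm) h
  have hprod : HasProd f (∏' n, f n) := by
    by_cases hz : ∀ n, f n ≠ 0
    · have hsumlog : Summable (fun n => Complex.log (f n)) := by
        apply Summable.of_norm_bounded_eventually_nat (g := fun n => 3 / 2 * ‖q ^ (2 * n + 1) * x‖)
        · apply Summable.congr
            (((summable_geometric_of_lt_one (by positivity) (qsq_lt hq)).mul_right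
              (3 / 2 * (‖q‖ * ‖x‖))))
          intro n
          rw [heq n]
          ring
        · filter_upwards [hT.eventually_le_const (by norm_num : (0:ℝ) < 1/2)] with n hn
          exact Complex.norm_log_one_add_half_le_self hn
      have hm : Multipliable f :=
        Complex.multipliable_of_summable_log hsumlog
      exact hm.hasProd
    · push_neg at hz
      obtain ⟨n0, hn0⟩ := hz
      have h0 : HasProd f 0 := by
        rw [HasProd]
        have hev : (fun _ : Finset ℕ => (0 : ℂ)) =ᶠ[atTop] fun s => ∏ b ∈ s, f b := by
          filter_upwards [Filter.eventually_ge_atTop ({n0} : Finset ℕ)] with s hs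
          exact (Finset.prod_eq_zero (hs (Finset.mem_singleton_self n0)) hn0).symm
        exact Tendsto.congr' hev tendsto_const_nhds
      rw [h0.tprod_eq]
      exact h0
  have h3 : Tendsto (fun N : ℕ => (∏ k ∈ Finset.range N, f k) *
      ∑' n : ℕ, qA q n * (q ^ (2 * N) * x) ^ n) atTop (𝓝 ((∏' n, f n) * 1)) :=
    hprod.tendsto_prod_nat.mul (qS_tendsto_one hq0 hq x)
  have h4 : (fun N : ℕ => (∏ k ∈ Finset.range N, f k) *
      ∑' n : ℕ, qA q n * (q ^ (2 * N) * x) ^ n) = fun _ => ∑' n : ℕ, qA q n * x ^ n := by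
    funext N
    exact (qS_iter hq0 hq x N).symm
  rw [h4] at h3
  exact (tendsto_nhds_unique tendsto_const_nhds h3).trans (mul_one _)
end

section
/- In a (noncommutative) ring, if U and V satisfy the Weyl relation UV = q²VU for a central invertible element q, then the elements X₁ = U, X₂ = V, X₃ = U^{−1}(1+qV), X₄ = U^{−1}(q^{−1} + U + V)V^{−1}, X₅ = (1+qU)V^{−1}, X₆ = U, X₇ = V satisfy the quantum Y-system relations X_i X_{i+2} = 1 + q X_{i+1} for i = 1, …, 5 (assuming U and V are invertible). -/
/-- If invertible `U`, `V` satisfy the Weyl relation `UV = q²VU` with `q` central and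
invertible, then `X₁ = U`, `X₂ = V`, `X₃ = U⁻¹(1+qV)`, `X₄ = U⁻¹(q⁻¹+U+V)V⁻¹`,
`X₅ = (1+qU)V⁻¹`, `X₆ = U`, `X₇ = V` satisfy the quantum Y-system
`Xᵢ X_{i+2} = 1 + q X_{i+1}` for `i = 1, …, 5`. -/
theorem quantum_ysystem_explicit {A : Type*} [Ring A] (q U V : Aˣ)
    (hq : ∀ a : A, (q : A) * a = a * (q : A))
    (hW : (U : A) * V = (q : A) ^ 2 * ((V : A) * U)) :
    let X : ℕ → A := fun i =>
      match i with
      | 1 => U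
      | 2 => V
      | 3 => (↑U⁻¹ : A) * (1 + (q : A) * V)
      | 4 => (↑U⁻¹ : A) * ((↑q⁻¹ : A) + U + V) * (↑V⁻¹ : A)
      | 5 => (1 + (q : A) * U) * (↑V⁻¹ : A)
      | 6 => U
      | 7 => V
      | _ => 0
    ∀ i, 1 ≤ i → i ≤ 5 → X i * X (i + 2) = 1 + (q : A) * X (i + 1) := by
  intro X i h1 h5
  set u : A := (U : A) with hu
  set v : A := (V : A) with hv
  set ui : A := (↑U⁻¹ : A) with hui
  set vi : A := (↑V⁻¹ : A) with hvi
  set qq : A := (q : A) with hqq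
  set qi : A := (↑q⁻¹ : A) with hqi
  -- centrality of q⁻¹
  have hqqi : qq * qi = 1 := q.mul_inv
  have hqiq : qi * qq = 1 := q.inv_mul
  have hqc : ∀ a : A, qi * a = a * qi := by
    intro a
    calc qi * a = qi * a * (qq * qi) := by rw [hqqi, mul_one]
      _ = qi * (a * qq) * qi := by rw [← mul_assoc, mul_assoc qi a qq]
      _ = qi * (qq * a) * qi := by rw [hq]
      _ = a * qi := by rw [← mul_assoc, hqiq, one_mul]
  -- basic cancellations (plain and continuation forms)
  have huui : u * ui = 1 := U.mul_inv
  have huiu : ui * u = 1 := U.inv_mul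
  have hvvi : v * vi = 1 := V.mul_inv
  have hviv : vi * v = 1 := V.inv_mul
  have hc1 : ∀ a : A, u * (ui * a) = a := fun a => by rw [← mul_assoc, huui, one_mul]
  have hc2 : ∀ a : A, ui * (u * a) = a := fun a => by rw [← mul_assoc, huiu, one_mul]
  have hc3 : ∀ a : A, v * (vi * a) = a := fun a => by rw [← mul_assoc, hvvi, one_mul]
  have hc4 : ∀ a : A, vi * (v * a) = a := fun a => by rw [← mul_assoc, hviv, one_mul]
  have hk1 : ∀ a : A, qq * (qi * a) = a := fun a => by rw [← mul_assoc, hqqi, one_mul]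
  have hk2 : ∀ a : A, qi * (qq * a) = a := fun a => by rw [← mul_assoc, hqiq, one_mul]
  -- moving q and q⁻¹ to the front
  have mq : ∀ x a : A, x * (qq * a) = qq * (x * a) := fun x a => by
    rw [← mul_assoc, ← hq, mul_assoc]
  have mqi : ∀ x a : A, x * (qi * a) = qi * (x * a) := fun x a => by
    rw [← mul_assoc, ← hqc, mul_assoc]
  have mq_u := mq u; have mq_v := mq v; have mq_ui := mq ui; have mq_vi := mq vi
  have mqi_u := mqi u; have mqi_v := mqi v; have mqi_ui := mqi ui; have mqi_vi := mqi vi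
  have pq_u : u * qq = qq * u := (hq u).symm
  have pq_v : v * qq = qq * v := (hq v).symm
  have pq_ui : ui * qq = qq * ui := (hq ui).symm
  have pq_vi : vi * qq = qq * vi := (hq vi).symm
  have pqi_u : u * qi = qi * u := (hqc u).symm
  have pqi_v : v * qi = qi * v := (hqc v).symm
  have pqi_ui : ui * qi = qi * ui := (hqc ui).symm
  have pqi_vi : vi * qi = qi * vi := (hqc vi).symm
  -- the Weyl relation in continuation form
  have hW' : u * v = qq * (qq * (v * u)) := by rw [hW, sq, mul_assoc]
  have hwU : ∀ a : A, u * (v * a) = qq * (qq * (v * (u * a))) := by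
    intro a
    rw [← mul_assoc, hW', mul_assoc, mul_assoc, mul_assoc]
  -- reorder rules: v before u, v before u⁻¹, v⁻¹ before u
  have hw1' : v * u = qi * (qi * (u * v)) := by
    rw [hW', hk2, hk2]
  have hw1 : ∀ a : A, v * (u * a) = qi * (qi * (u * (v * a))) := by
    intro a
    rw [← mul_assoc, hw1', mul_assoc, mul_assoc, mul_assoc]
  have hw2' : v * ui = qq * (qq * (ui * v)) := by
    conv_lhs => rw [← hc2 (v * ui)]
    rw [hwU, huui, mul_one, mq_ui, mq_ui]
  have hw2 : ∀ a : A, v * (ui * a) = qq * (qq * (ui * (v * a))) := by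
    intro a
    rw [← mul_assoc, hw2', mul_assoc, mul_assoc, mul_assoc]
  have hw3' : vi * u = qq * (qq * (u * vi)) := by
    have h0 : u = qq * (qq * (v * (u * vi))) := by
      have h := hwU vi
      rwa [hvvi, mul_one] at h
    conv_lhs => rw [h0]
    rw [mq_vi, mq_vi, hc4]
  have hw3 : ∀ a : A, vi * (u * a) = qq * (qq * (u * (vi * a))) := by
    intro a
    rw [← mul_assoc, hw3', mul_assoc, mul_assoc, mul_assoc]
  interval_cases i
  · show u * (ui * (1 + qq * v)) = 1 + qq * v
    simp only [mul_add, add_mul, mul_one, one_mul, mul_assoc, hc1, hc2, hc3, hc4,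
      huui, huiu, hvvi, hviv, hqqi, hqiq, hk1, hk2, mq_u, mq_v, mq_ui, mq_vi,
      mqi_u, mqi_v, mqi_ui, mqi_vi, pq_u, pq_v, pq_ui, pq_vi, pqi_u, pqi_v,
      pqi_ui, pqi_vi, hw1, hw1', hw2, hw2', hw3, hw3']
  · show v * (ui * (qi + u + v) * vi) = 1 + qq * (ui * (1 + qq * v))
    simp only [mul_add, add_mul, mul_one, one_mul, mul_assoc, hc1, hc2, hc3, hc4,
      huui, huiu, hvvi, hviv, hqqi, hqiq, hk1, hk2, mq_u, mq_v, mq_ui, mq_vi,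
      mqi_u, mqi_v, mqi_ui, mqi_vi, pq_u, pq_v, pq_ui, pq_vi, pqi_u, pqi_v,
      pqi_ui, pqi_vi, hw1, hw1', hw2, hw2', hw3, hw3']
    abel
  · show (ui * (1 + qq * v)) * ((1 + qq * u) * vi) = 1 + qq * (ui * (qi + u + v) * vi)
    simp only [mul_add, add_mul, mul_one, one_mul, mul_assoc, hc1, hc2, hc3, hc4,
      huui, huiu, hvvi, hviv, hqqi, hqiq, hk1, hk2, mq_u, mq_v, mq_ui, mq_vi,
      mqi_u, mqi_v, mqi_ui, mqi_vi, pq_u, pq_v, pq_ui, pq_vi, pqi_u, pqi_v,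
      pqi_ui, pqi_vi, hw1, hw1', hw2, hw2', hw3, hw3']
    abel
  · show (ui * (qi + u + v) * vi) * u = 1 + qq * ((1 + qq * u) * vi)
    simp only [mul_add, add_mul, mul_one, one_mul, mul_assoc, hc1, hc2, hc3, hc4,
      huui, huiu, hvvi, hviv, hqqi, hqiq, hk1, hk2, mq_u, mq_v, mq_ui, mq_vi,
      mqi_u, mqi_v, mqi_ui, mqi_vi, pq_u, pq_v, pq_ui, pq_vi, pqi_u, pqi_v,
      pqi_ui, pqi_vi, hw1, hw1', hw2, hw2', hw3, hw3']
    abel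
  · show ((1 + qq * u) * vi) * v = 1 + qq * u
    simp only [mul_add, add_mul, mul_one, one_mul, mul_assoc, hc1, hc2, hc3, hc4,
      huui, huiu, hvvi, hviv, hqqi, hqiq, hk1, hk2, mq_u, mq_v, mq_ui, mq_vi,
      mqi_u, mqi_v, mqi_ui, mqi_vi, pq_u, pq_v, pq_ui, pq_vi, pqi_u, pqi_v,
      pqi_ui, pqi_vi, hw1, hw1', hw2, hw2', hw3, hw3']
end

section
/- Quantum Y-system periodicity: in an associative algebra with invertible central q and invertible U, V satisfying UV = q²VU, the sequence defined by X₁ = U, X₂ = V and X_{i+2} = X_i^{−1}(1 + qX_{i+1}) satisfies X_{i+5} = X_i for all i (in particular X₆ = X₁ and X₇ = X₂), assuming each X_i is invertible. -/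
/-- Quantum Y-system periodicity: if `q` is central invertible, `UV = q²VU` with `U`, `V`
invertible, and the invertible elements `Xᵢ` satisfy `X₁ = U`, `X₂ = V`,
`X_{i+2} = Xᵢ⁻¹(1 + q X_{i+1})`, then `X_{i+5} = Xᵢ` for all `i ≥ 1`. -/
theorem quantum_ysystem_period_five {A : Type*} [Ring A] (q U V : Aˣ)
    (hq : ∀ a : A, (q : A) * a = a * (q : A))
    (hW : (U : A) * V = (q : A) ^ 2 * ((V : A) * U))
    (X : ℕ → Aˣ) (h1 : X 1 = U) (h2 : X 2 = V)
    (hrec : ∀ i, 1 ≤ i → (X (i + 2) : A) = (↑(X i)⁻¹ : A) * (1 + (q : A) * X (i + 1))) :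
    ∀ i, 1 ≤ i → X (i + 5) = X i := by
  set u : A := (U : A) with hu
  set v : A := (V : A) with hv
  set iu : A := ((U⁻¹ : Aˣ) : A) with hiu
  set iv : A := ((V⁻¹ : Aˣ) : A) with hiv
  set qq : A := (q : A) with hqq
  set iq : A := ((q⁻¹ : Aˣ) : A) with hiq
  have huiu : u * iu = 1 := U.mul_inv
  have hiuu : iu * u = 1 := U.inv_mul
  have hviv : v * iv = 1 := V.mul_inv
  have hivv : iv * v = 1 := V.inv_mul
  have hqiq : qq * iq = 1 := q.mul_inv
  have hiqq : iq * qq = 1 := q.inv_mul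
  -- q⁻¹ is central as well
  have hq' : ∀ a : A, iq * a = a * iq := by
    intro a
    calc iq * a = iq * a * (qq * iq) := by rw [hqiq, mul_one]
      _ = iq * (a * qq) * iq := by noncomm_ring
      _ = iq * (qq * a) * iq := by rw [hq a]
      _ = (iq * qq) * (a * iq) := by noncomm_ring
      _ = a * iq := by rw [hiqq, one_mul]
  -- scalar moving lemmas
  have mq : ∀ a b : A, a * (qq * b) = qq * (a * b) := by
    intro a b; rw [← mul_assoc, ← hq a, mul_assoc]
  have miq : ∀ a b : A, a * (iq * b) = iq * (a * b) := by
    intro a b; rw [← mul_assoc, ← hq' a, mul_assoc]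
  have cqiq : ∀ b : A, qq * (iq * b) = b := by
    intro b; rw [← mul_assoc, hqiq, one_mul]
  have ciqq : ∀ b : A, iq * (qq * b) = b := by
    intro b; rw [← mul_assoc, hiqq, one_mul]
  have cuiu : ∀ b : A, u * (iu * b) = b := by
    intro b; rw [← mul_assoc, huiu, one_mul]
  have ciuu : ∀ b : A, iu * (u * b) = b := by
    intro b; rw [← mul_assoc, hiuu, one_mul]
  have cviv : ∀ b : A, v * (iv * b) = b := by
    intro b; rw [← mul_assoc, hviv, one_mul]
  have civv : ∀ b : A, iv * (v * b) = b := by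
    intro b; rw [← mul_assoc, hivv, one_mul]
  -- commutation relations, normal order: iv < iu < v < u
  have W1 : u * v = qq * (qq * (v * u)) := by
    rw [hW, pow_two, mul_assoc]
  have w1 : ∀ b : A, u * (v * b) = qq * (qq * (v * (u * b))) := by
    intro b
    calc u * (v * b) = (u * v) * b := by rw [mul_assoc]
      _ = (qq * (qq * (v * u))) * b := by rw [W1]
      _ = qq * (qq * (v * (u * b))) := by simp only [mul_assoc]
  have W4 : u * iv = iq * (iq * (iv * u)) := by
    have h0 : u = qq * (qq * (v * (u * iv))) := by
      calc u = u * (v * iv) := by rw [hviv, mul_one]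
        _ = (u * v) * iv := by rw [mul_assoc]
        _ = (qq * (qq * (v * u))) * iv := by rw [W1]
        _ = qq * (qq * (v * (u * iv))) := by simp only [mul_assoc]
    calc u * iv = iv * (v * (u * iv)) := by rw [civv]
      _ = iv * (iq * (iq * (qq * (qq * (v * (u * iv)))))) := by rw [ciqq, ciqq]
      _ = iv * (iq * (iq * u)) := by rw [← h0]
      _ = iq * (iq * (iv * u)) := by rw [miq, miq]
  have w4 : ∀ b : A, u * (iv * b) = iq * (iq * (iv * (u * b))) := by
    intro b
    calc u * (iv * b) = (u * iv) * b := by rw [mul_assoc]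
      _ = (iq * (iq * (iv * u))) * b := by rw [W4]
      _ = iq * (iq * (iv * (u * b))) := by simp only [mul_assoc]
  have W2 : v * iu = qq * (qq * (iu * v)) := by
    calc v * iu = iu * (u * (v * iu)) := by rw [ciuu]
      _ = iu * (qq * (qq * (v * (u * iu)))) := by rw [w1]
      _ = iu * (qq * (qq * (v * 1))) := by rw [huiu]
      _ = qq * (qq * (iu * v)) := by rw [mul_one, mq, mq]
  have w2 : ∀ b : A, v * (iu * b) = qq * (qq * (iu * (v * b))) := by
    intro b
    calc v * (iu * b) = (v * iu) * b := by rw [mul_assoc]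
      _ = (qq * (qq * (iu * v))) * b := by rw [W2]
      _ = qq * (qq * (iu * (v * b))) := by simp only [mul_assoc]
  have W2' : iu * v = iq * (iq * (v * iu)) := by
    rw [W2, ciqq, ciqq]
  have w2' : ∀ b : A, iu * (v * b) = iq * (iq * (v * (iu * b))) := by
    intro b
    calc iu * (v * b) = (iu * v) * b := by rw [mul_assoc]
      _ = (iq * (iq * (v * iu))) * b := by rw [W2']
      _ = iq * (iq * (v * (iu * b))) := by simp only [mul_assoc]
  have W3 : iu * iv = qq * (qq * (iv * iu)) := by
    have h0 : iv * iu = iq * (iq * (iu * iv)) := by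
      calc iv * iu = iu * (u * (iv * iu)) := by rw [ciuu]
        _ = iu * (iq * (iq * (iv * (u * iu)))) := by rw [w4]
        _ = iu * (iq * (iq * (iv * 1))) := by rw [huiu]
        _ = iq * (iq * (iu * iv)) := by rw [mul_one, miq, miq]
    rw [h0, cqiq, cqiq]
  have w3 : ∀ b : A, iu * (iv * b) = qq * (qq * (iv * (iu * b))) := by
    intro b
    calc iu * (iv * b) = (iu * iv) * b := by rw [mul_assoc]
      _ = (qq * (qq * (iv * iu))) * b := by rw [W3]
      _ = qq * (qq * (iv * (iu * b))) := by simp only [mul_assoc]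
  -- candidate values
  set x3 : A := iu * (1 + qq * v) with hx3
  set x4 : A := iv * (1 + qq * x3) with hx4
  set x5 : A := (1 + qq * u) * iv with hx5
  -- the five key identities
  have I3 : u * x3 = 1 + qq * v := by
    rw [hx3, cuiu]
  have I4 : v * x4 = 1 + qq * x3 := by
    rw [hx4, cviv]
  have I5 : x3 * x5 = 1 + qq * x4 := by
    simp only [hx3, hx4, hx5, mul_add, add_mul, mul_one, one_mul, mul_assoc,
      mq u, mq v, mq iu, mq iv, miq u, miq v, miq iu, miq iv,
      w1, w2', w3, w4, W1, W2', W3, W4, cqiq, ciqq, cuiu, ciuu, cviv, civv,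
      huiu, hiuu, hviv, hivv, hqiq, hiqq]
    abel
  have I6 : x4 * u = 1 + qq * x5 := by
    simp only [hx3, hx4, hx5, mul_add, add_mul, mul_one, one_mul, mul_assoc,
      mq u, mq v, mq iu, mq iv, miq u, miq v, miq iu, miq iv,
      w1, w2', w3, w4, W1, W2', W3, W4, cqiq, ciqq, cuiu, ciuu, cviv, civv,
      huiu, hiuu, hviv, hivv, hqiq, hiqq]
    abel
  have I7 : x5 * v = 1 + qq * u := by
    rw [hx5, mul_assoc, hivv, mul_one]
  -- recurrence in product form
  have r : ∀ i, 1 ≤ i → (X i : A) * X (i + 2) = 1 + qq * X (i + 1) := by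
    intro i hi
    rw [hrec i hi, ← mul_assoc, Units.mul_inv, one_mul]
  -- compute the coercions of X 3 .. X 7
  have e3 : (X 3 : A) = x3 := by
    have h := r 1 le_rfl
    norm_num at h
    rw [h1, h2, ← hu, ← hv] at h
    refine (Units.mul_right_inj U).mp ?_
    rw [← hu, h, ← I3]
  have e4 : (X 4 : A) = x4 := by
    have h := r 2 (by norm_num)
    norm_num at h
    rw [h2, ← hv, e3] at h
    refine (Units.mul_right_inj V).mp ?_
    rw [← hv, h, ← I4]
  have e5 : (X 5 : A) = x5 := by
    have h := r 3 (by norm_num)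
    norm_num at h
    rw [e4] at h
    refine (Units.mul_right_inj (X 3)).mp ?_
    rw [h, ← I5, e3]
  have e6 : (X 6 : A) = u := by
    have h := r 4 (by norm_num)
    norm_num at h
    rw [e5] at h
    refine (Units.mul_right_inj (X 4)).mp ?_
    rw [h, ← I6, e4]
  have e7 : (X 7 : A) = v := by
    have h := r 5 (by norm_num)
    norm_num at h
    rw [e6] at h
    refine (Units.mul_right_inj (X 5)).mp ?_
    rw [h, ← I7, e5]
  -- two-step induction
  have key : ∀ n : ℕ, X (n + 1 + 5) = X (n + 1) ∧ X (n + 2 + 5) = X (n + 2) := by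
    intro n
    induction n with
    | zero =>
      constructor
      · exact Units.ext (by rw [e6, h1])
      · exact Units.ext (by rw [e7, h2])
    | succ m ih =>
      refine ⟨ih.2, ?_⟩
      have ra := r (m + 1) (by omega)
      have rb := r (m + 6) (by omega)
      have hA : X (m + 6) = X (m + 1) := by
        have := ih.1; convert this using 2 <;> omega
      have hB : X (m + 7) = X (m + 2) := by
        have := ih.2; convert this using 2 <;> omega
      have : (X (m + 1) : A) * X (m + 8) = (X (m + 1) : A) * X (m + 3) := by
        calc (X (m + 1) : A) * X (m + 8) = (X (m + 6) : A) * X (m + 8) := by rw [hA]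
          _ = 1 + qq * X (m + 7) := rb
          _ = 1 + qq * X (m + 2) := by rw [hB]
          _ = (X (m + 1) : A) * X (m + 3) := ra.symm
      have h8 : X (m + 8) = X (m + 3) :=
        Units.ext ((Units.mul_right_inj (X (m + 1))).mp this)
      convert h8 using 2 <;> omega
  intro i hi
  obtain ⟨n, rfl⟩ := Nat.exists_eq_add_of_le hi
  have := (key n).1
  convert this using 2 <;> omega
end

section
/- If UV = q²VU in an associative algebra with q central invertible, and e is a formal power series with e(qu) (1+u) = e(q^{−1}u) (the q-exponential functional equation), then the pentagon relation e(V)e(U) = e(U)e(q^{−1}UV)e(V) follows from the Schützenberger identity e(U)e(V) = e(U+V) together with e(V)e(U) = e(U+V+q^{−1}UV). -/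
/-- Given `UV = q²VU` (`q` central invertible) and a "q-exponential" `e` satisfying the
functional equation `e(qu)(1+u) = e(q⁻¹u)`, the Schützenberger identity
`e(a)e(b) = e(a+b)` for every Weyl pair with parameter `q`, and the Faddeev–Volkov
identity `e(V)e(U) = e(U+V+q⁻¹UV)`, the pentagon relation
`e(V)e(U) = e(U) e(q⁻¹UV) e(V)` follows. -/
theorem pentagon_from_schutzenberger {A : Type*} [Ring A] (q : Aˣ) (U V : A)
    (hq : ∀ a : A, (q : A) * a = a * (q : A))
    (hW : U * V = (q : A) ^ 2 * (V * U))
    (e : A → A)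
    (hfe : ∀ u : A, e ((q : A) * u) * (1 + u) = e ((↑q⁻¹ : A) * u))
    (hSch : ∀ a b : A, a * b = (q : A) ^ 2 * (b * a) → e a * e b = e (a + b))
    (hFV : e V * e U = e (U + V + (↑q⁻¹ : A) * U * V)) :
    e V * e U = e U * e ((↑q⁻¹ : A) * U * V) * e V := by
  set c : A := (↑q⁻¹ : A) with hc
  have hc2 : (q : A) * c = 1 := q.mul_inv
  have hc1 : c * (q : A) = 1 := q.inv_mul
  -- c is central
  have hcC : ∀ a : A, c * a = a * c := by
    intro a
    calc c * a = c * a * ((q : A) * c) := by rw [hc2, mul_one]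
      _ = c * (a * (q : A)) * c := by simp [mul_assoc]
      _ = c * ((q : A) * a) * c := by rw [← hq a]
      _ = a * c := by rw [← mul_assoc, hc1, one_mul]
  have hcC' : ∀ a b : A, a * (c * b) = c * (a * b) := by
    intro a b; rw [← mul_assoc, ← hcC, mul_assoc]
  have hqc : ∀ x : A, (q : A) * (c * x) = x := by
    intro x; rw [← mul_assoc, hc2, one_mul]
  have hcq : ∀ x : A, c * ((q : A) * x) = x := by
    intro x; rw [← mul_assoc, hc1, one_mul]
  have hVU : V * U = c * (c * (U * V)) := by
    rw [hW, show ((q : A) ^ 2 * (V * U)) = (q : A) * ((q : A) * (V * U)) from by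
      rw [pow_two, mul_assoc], hcq, hcq]
  have hVU' : ∀ x : A, V * (U * x) = c * (c * (U * (V * x))) := by
    intro x
    calc V * (U * x) = (V * U) * x := by rw [mul_assoc]
      _ = c * (c * (U * V)) * x := by rw [hVU]
      _ = c * (c * (U * (V * x))) := by simp [mul_assoc]
  -- Weyl relation for c U V and V
  have h1 : (c * U * V) * V = (q : A) ^ 2 * (V * (c * U * V)) := by
    have key : V * (c * U * V) = c * (c * (c * (U * (V * V)))) := by
      rw [mul_assoc c U V, hcC' V, hVU' V]
    rw [key, pow_two, mul_assoc (q : A) (q : A), hqc, hqc]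
    simp [mul_assoc]
  -- Weyl relation for U and (c U V + V)
  have h2 : U * (c * U * V + V) = (q : A) ^ 2 * ((c * U * V + V) * U) := by
    have lhs : U * (c * U * V + V) = c * (U * (U * V)) + U * V := by
      rw [mul_add, mul_assoc c U V, hcC']
    have rhs : (c * U * V + V) * U
        = c * (c * (c * (U * (U * V)))) + c * (c * (U * V)) := by
      rw [add_mul, ← hVU]
      congr 1
      calc c * U * V * U = c * (U * (V * U)) := by simp [mul_assoc]
        _ = c * (U * (c * (c * (U * V)))) := by rw [hVU]
        _ = c * (c * (c * (U * (U * V)))) := by rw [hcC' U, hcC' U]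
    rw [lhs, rhs, pow_two, mul_add, mul_assoc (q : A) (q : A), hqc, hqc,
      mul_assoc (q : A) (q : A), hqc, hqc]
  calc e V * e U = e (U + V + c * U * V) := hFV
    _ = e (U + (c * U * V + V)) := by
        rw [show U + V + c * U * V = U + (c * U * V + V) from by abel]
    _ = e U * e (c * U * V + V) := (hSch U _ h2).symm
    _ = e U * (e (c * U * V) * e V) := by rw [hSch _ _ h1]
    _ = e U * e (c * U * V) * e V := (mul_assoc _ _ _).symm
end

section
/- Schützenberger's identity: if UV = q²VU in the algebra of formal power series in noncommuting U, V over ℂ(q), then e(U)e(V) = e(U+V), where e(x) = 1 + Σ_{n≥1} q^{n(n−1)/2} xⁿ/((q^{−1}−q)(q^{−2}−q²)⋯(q^{−n}−qⁿ)). -/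
/-- Coefficients of the q-exponential `e(x) = Σₙ cₙ xⁿ`,
`cₙ = q^{n(n-1)/2} / ((q⁻¹-q)(q⁻²-q²)⋯(q⁻ⁿ-qⁿ))`. -/
noncomputable def qExpCoeff {K : Type*} [Field K] (q : K) (n : ℕ) : K :=
  q ^ (n * (n - 1) / 2) / ∏ k ∈ Finset.range n, (q ^ (-(k + 1) : ℤ) - q ^ (k + 1))

namespace Schutz

variable {K : Type*} [Field K]

/-- `d q n = q^{-n} - q^n` (with nat powers). -/
noncomputable def d (q : K) (n : ℕ) : K := (q ^ n)⁻¹ - q ^ n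

lemma factor_eq (q : K) (k : ℕ) : q ^ (-(k + 1) : ℤ) - q ^ (k + 1) = d q (k + 1) := by
  rw [show (-(k + 1) : ℤ) = -((k + 1 : ℕ) : ℤ) by push_cast; ring, zpow_neg, zpow_natCast, d]

lemma qExpCoeff_eq (q : K) (n : ℕ) :
    qExpCoeff q n = q ^ (n * (n - 1) / 2) / ∏ k ∈ Finset.range n, d q (k + 1) := by
  unfold qExpCoeff
  rw [Finset.prod_congr rfl fun k _ => factor_eq q k]

lemma qExpCoeff_zero (q : K) : qExpCoeff q 0 = 1 := by
  simp [qExpCoeff]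

lemma qExpCoeff_succ (q : K) (n : ℕ) :
    qExpCoeff q (n + 1) = qExpCoeff q n * (q ^ n / d q (n + 1)) := by
  rw [qExpCoeff_eq, qExpCoeff_eq, Finset.prod_range_succ,
    show (n + 1) * ((n + 1) - 1) / 2 = n * (n - 1) / 2 + n by
      rcases n with _ | m
      · rfl
      · simp only [Nat.add_sub_cancel]
        obtain ⟨r, hr⟩ := Nat.even_mul_succ_self m
        have h1 : (m + 1 + 1) * (m + 1) = m * (m + 1) + 2 * (m + 1) := by ring
        have h2 : (m + 1) * m = m * (m + 1) := by ring
        omega,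
    pow_add, div_mul_div_comm]

lemma qExpCoeff_ne_zero {q : K} (hq0 : q ≠ 0) (hd : ∀ m : ℕ, d q (m + 1) ≠ 0) (n : ℕ) :
    qExpCoeff q n ≠ 0 := by
  induction n with
  | zero => simp [qExpCoeff_zero]
  | succ n ih =>
      rw [qExpCoeff_succ]
      exact mul_ne_zero ih (div_ne_zero (pow_ne_zero _ hq0) (hd n))

/-- Gaussian binomial (for base `q^{-2}`), as a ratio of q-exponential coefficients. -/
noncomputable def B (q : K) (n k : ℕ) : K :=
  if k ≤ n then qExpCoeff q k * qExpCoeff q (n - k) / qExpCoeff q n else 0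

lemma B_zero {q : K} (hq0 : q ≠ 0) (hd : ∀ m : ℕ, d q (m + 1) ≠ 0) (n : ℕ) :
    B q n 0 = 1 := by
  simp [B, qExpCoeff_zero, div_self (qExpCoeff_ne_zero hq0 hd n)]

lemma B_self {q : K} (hq0 : q ≠ 0) (hd : ∀ m : ℕ, d q (m + 1) ≠ 0) (n : ℕ) :
    B q n n = 1 := by
  simp [B, qExpCoeff_zero, div_self (qExpCoeff_ne_zero hq0 hd n)]

lemma B_of_gt {q : K} {n k : ℕ} (h : n < k) : B q n k = 0 := by
  simp [B, Nat.not_le.mpr h]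

lemma pascal_core {q : K} (hq0 : q ≠ 0) (hd : ∀ m : ℕ, d q (m + 1) ≠ 0) (j k : ℕ) :
    B q (j + k + 2) (k + 1)
      = B q (j + k + 1) k + ((q ^ 2)⁻¹) ^ (k + 1) * B q (j + k + 1) (k + 1) := by
  have c := fun n => qExpCoeff_ne_zero hq0 hd (K := K) (q := q) n
  have hdq : ∀ m : ℕ, d q (m + 1) = (1 - q ^ (m + 1) * q ^ (m + 1)) / q ^ (m + 1) := by
    intro m
    rw [d, eq_div_iff (pow_ne_zero _ hq0), sub_mul, inv_mul_cancel₀ (pow_ne_zero _ hq0)]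
  have he : ∀ m : ℕ, (1 : K) - q ^ (m + 1) * q ^ (m + 1) ≠ 0 := by
    intro m
    have := hd m
    rw [hdq m] at this
    exact fun h => this (by rw [h, zero_div])
  have hsucc : ∀ m : ℕ, qExpCoeff q (m + 1)
      = qExpCoeff q m * q ^ m * q ^ (m + 1) / (1 - q ^ (m + 1) * q ^ (m + 1)) := by
    intro m
    rw [qExpCoeff_succ, hdq m, div_div_eq_mul_div]
    ring
  have hQ : (((q : K) ^ 2)⁻¹) ^ (k + 1) = ((q ^ (k + 1)) ^ 2)⁻¹ := by
    rw [inv_pow, ← pow_mul, ← pow_mul, Nat.mul_comm]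
  rw [B, B, B, if_pos (by omega), if_pos (by omega), if_pos (by omega),
    show j + k + 2 - (k + 1) = j + 1 by omega, show j + k + 1 - k = j + 1 by omega,
    show j + k + 1 - (k + 1) = j by omega,
    show j + k + 2 = (j + k + 1) + 1 by omega, hQ, inv_mul_eq_div, div_div,
    div_add_div _ _ (c (j + k + 1)) (mul_ne_zero (c (j + k + 1)) (pow_ne_zero _ (pow_ne_zero _ hq0))),
    div_eq_div_iff (c (j + k + 1 + 1)) (mul_ne_zero (c (j + k + 1)) (mul_ne_zero (c (j + k + 1)) (pow_ne_zero _ (pow_ne_zero _ hq0))))]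
  simp only [hsucc]
  have h1 := he k
  have h2 := he j
  have h3 := he (j + k + 1)
  have h4 := he (j + k)
  have ha := c k
  have hb := c j
  have hw := c (j + k)
  have hx : (q : K) ^ k ≠ 0 := pow_ne_zero _ hq0
  have hy : (q : K) ^ j ≠ 0 := pow_ne_zero _ hq0
  simp only [pow_succ, pow_add] at h1 h2 h3 h4 ⊢
  set x := (q : K) ^ k with hxdef
  set y := (q : K) ^ j with hydef
  set a := qExpCoeff q k with hadef
  set b := qExpCoeff q j with hbdef
  set w := qExpCoeff q (j + k) with hwdef
  clear_value x y a b w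
  clear hdq he hQ hd c hxdef hydef hadef hbdef hwdef hsucc
  generalize hD1 : 1 - x * q * (x * q) = D1 at h1 ⊢
  generalize hD2 : 1 - y * q * (y * q) = D2 at h2 ⊢
  generalize hD3 : 1 - y * x * q * q * (y * x * q * q) = D3 at h3 ⊢
  generalize hD4 : 1 - y * x * q * (y * x * q) = D4 at h4 ⊢
  field_simp
  subst hD1 hD2 hD3 hD4
  ring

lemma pascal {q : K} (hq0 : q ≠ 0) (hd : ∀ m : ℕ, d q (m + 1) ≠ 0) {n i : ℕ} (hi : i ≤ n) :
    B q (n + 1) (i + 1) = B q n i + ((q ^ 2)⁻¹) ^ (i + 1) * B q n (i + 1) := by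
  rcases eq_or_lt_of_le hi with rfl | h
  · rw [B_self hq0 hd, B_self hq0 hd, B_of_gt (Nat.lt_succ_self i), mul_zero, add_zero]
  · obtain ⟨j, hj⟩ : ∃ j, n = j + i + 1 := ⟨n - i - 1, by omega⟩
    rw [show n + 1 = j + i + 2 by omega, hj]
    exact pascal_core hq0 hd j i

section ringA
variable {A : Type*} [Ring A] [Algebra K A]

lemma comm_pow {q : K} (hq0 : q ≠ 0) {U V : A} (hW : U * V = q ^ 2 • (V * U)) (k : ℕ) :
    V * U ^ k = ((q ^ 2)⁻¹) ^ k • (U ^ k * V) := by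
  have hq2 : (q : K) ^ 2 ≠ 0 := pow_ne_zero _ hq0
  have hVU : V * U = (q ^ 2)⁻¹ • (U * V) := by
    rw [hW, smul_smul, inv_mul_cancel₀ hq2, one_smul]
  induction k with
  | zero => simp
  | succ k ih =>
      calc V * U ^ (k + 1) = (V * U ^ k) * U := by rw [pow_succ U, mul_assoc]
        _ = ((q ^ 2)⁻¹) ^ k • (U ^ k * (V * U)) := by
              rw [ih, smul_mul_assoc, mul_assoc]
        _ = ((q ^ 2)⁻¹) ^ k • (U ^ k * ((q ^ 2)⁻¹ • (U * V))) := by rw [hVU]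
        _ = ((q ^ 2)⁻¹) ^ (k + 1) • (U ^ (k + 1) * V) := by
              rw [mul_smul_comm, smul_smul, ← pow_succ, pow_succ U, mul_assoc]

lemma qbinom {q : K} (hq0 : q ≠ 0) (hd : ∀ m : ℕ, d q (m + 1) ≠ 0)
    {U V : A} (hW : U * V = q ^ 2 • (V * U)) (n : ℕ) :
    (U + V) ^ n = ∑ k ∈ Finset.range (n + 1), B q n k • (U ^ k * V ^ (n - k)) := by
  induction n with
  | zero => simp [B_zero hq0 hd]
  | succ n ih =>
      rw [pow_succ', ih, Finset.mul_sum]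
      have expand : ∀ k ∈ Finset.range (n + 1),
          (U + V) * (B q n k • (U ^ k * V ^ (n - k)))
            = B q n k • (U ^ (k + 1) * V ^ (n - k))
              + (((q ^ 2)⁻¹) ^ k * B q n k) • (U ^ k * V ^ (n + 1 - k)) := by
        intro k hk
        have hkn : k ≤ n := Nat.lt_succ_iff.mp (Finset.mem_range.mp hk)
        rw [add_mul, mul_smul_comm, mul_smul_comm]
        congr 1
        · rw [← mul_assoc, ← pow_succ' U]
        · rw [← mul_assoc, comm_pow hq0 hW k, smul_mul_assoc, smul_smul, mul_assoc,
            ← pow_succ' V, show n - k + 1 = n + 1 - k by omega, mul_comm (B q n k)]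
      rw [Finset.sum_congr rfl expand, Finset.sum_add_distrib]
      -- target sum, split off the k = 0 term
      rw [Finset.sum_range_succ' (fun k => B q (n + 1) k • (U ^ k * V ^ (n + 1 - k))) (n + 1)]
      -- rewrite the generic term with the Pascal rule
      have step : ∀ i ∈ Finset.range (n + 1),
          B q (n + 1) (i + 1) • (U ^ (i + 1) * V ^ (n + 1 - (i + 1)))
            = B q n i • (U ^ (i + 1) * V ^ (n - i))
              + (((q ^ 2)⁻¹) ^ (i + 1) * B q n (i + 1)) • (U ^ (i + 1) * V ^ (n - i)) := by
        intro i hi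
        have hin : i ≤ n := Nat.lt_succ_iff.mp (Finset.mem_range.mp hi)
        rw [pascal hq0 hd hin, add_smul, show n + 1 - (i + 1) = n - i by omega]
      rw [Finset.sum_congr rfl step, Finset.sum_add_distrib]
      -- second sums match after shifting the index
      have hsecond : ∑ k ∈ Finset.range (n + 1), (((q ^ 2)⁻¹) ^ k * B q n k) • (U ^ k * V ^ (n + 1 - k))
          = (∑ i ∈ Finset.range (n + 1),
              (((q ^ 2)⁻¹) ^ (i + 1) * B q n (i + 1)) • (U ^ (i + 1) * V ^ (n - i)))
            + B q (n + 1) 0 • (U ^ 0 * V ^ (n + 1 - 0)) := by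
        rw [Finset.sum_range_succ' (fun k => (((q ^ 2)⁻¹) ^ k * B q n k) • (U ^ k * V ^ (n + 1 - k))) n]
        rw [Finset.sum_range_succ]
        simp only [B_of_gt (Nat.lt_succ_self n), mul_zero, zero_smul, add_zero,
          B_zero hq0 hd, pow_zero, one_mul, one_smul, Nat.sub_zero]
        apply congrArg₂ _ (Finset.sum_congr rfl fun i hi => ?_) rfl
        rw [show n + 1 - (i + 1) = n - i by omega]
      rw [hsecond, add_assoc]


lemma c_mul_B {q : K} (hq0 : q ≠ 0) (hd : ∀ m : ℕ, d q (m + 1) ≠ 0) {n k : ℕ} (hk : k ≤ n) :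
    qExpCoeff q n * B q n k = qExpCoeff q k * qExpCoeff q (n - k) := by
  rw [B, if_pos hk, mul_comm, div_mul_cancel₀ _ (qExpCoeff_ne_zero hq0 hd n)]

end ringA
end Schutz

/-- Schützenberger's identity `e(U)e(V) = e(U+V)` for a Weyl pair `UV = q²VU`.
The formal power series statement is rendered via nilpotent truncation: if
`U^N = V^N = 0` then all three series are the indicated finite sums (all higher
terms vanish, since `(U+V)^k = 0` for `k ≥ 2N - 1` in the quantum plane), and the
identity holds exactly. -/
theorem schutzenberger_qExp {K : Type*} [Field K] {A : Type*} [Ring A] [Algebra K A]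
    (q : K) (hq0 : q ≠ 0) (hq : ∀ n : ℕ, 1 ≤ n → q ^ (-(n : ℤ)) - q ^ n ≠ 0)
    (U V : A) (hW : U * V = q ^ 2 • (V * U))
    (N : ℕ) (hU : U ^ N = 0) (hV : V ^ N = 0) :
    (∑ n ∈ Finset.range (2 * N), qExpCoeff q n • U ^ n) *
        (∑ n ∈ Finset.range (2 * N), qExpCoeff q n • V ^ n) =
      ∑ n ∈ Finset.range (2 * N), qExpCoeff q n • (U + V) ^ n := by
  classical
  have hd : ∀ m : ℕ, Schutz.d q (m + 1) ≠ 0 := by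
    intro m
    have h := hq (m + 1) (by omega)
    rwa [zpow_neg, zpow_natCast] at h
  have hUz : ∀ a : ℕ, N ≤ a → U ^ a = 0 := by
    intro a ha
    obtain ⟨m, rfl⟩ := Nat.exists_eq_add_of_le ha
    rw [pow_add, hU, zero_mul]
  have hVz : ∀ a : ℕ, N ≤ a → V ^ a = 0 := by
    intro a ha
    obtain ⟨m, rfl⟩ := Nat.exists_eq_add_of_le ha
    rw [pow_add, hV, zero_mul]
  have hL : (∑ n ∈ Finset.range (2 * N), qExpCoeff q n • U ^ n) *
        (∑ n ∈ Finset.range (2 * N), qExpCoeff q n • V ^ n)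
      = ∑ p ∈ Finset.range (2 * N) ×ˢ Finset.range (2 * N),
          (qExpCoeff q p.1 * qExpCoeff q p.2) • (U ^ p.1 * V ^ p.2) := by
    rw [Finset.sum_mul_sum, Finset.sum_product]
    exact Finset.sum_congr rfl fun i _ =>
      Finset.sum_congr rfl fun j _ => smul_mul_smul_comm _ _ _ _
  have hR : (∑ n ∈ Finset.range (2 * N), qExpCoeff q n • (U + V) ^ n)
      = ∑ n ∈ Finset.range (2 * N), ∑ k ∈ Finset.range (n + 1),
          (qExpCoeff q k * qExpCoeff q (n - k)) • (U ^ k * V ^ (n - k)) := by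
    refine Finset.sum_congr rfl fun n _ => ?_
    rw [Schutz.qbinom hq0 hd hW n, Finset.smul_sum]
    refine Finset.sum_congr rfl fun k hk => ?_
    rw [smul_smul, Schutz.c_mul_B hq0 hd (Nat.lt_succ_iff.mp (Finset.mem_range.mp hk))]
  rw [hL, hR]
  have hbij : (∑ n ∈ Finset.range (2 * N), ∑ k ∈ Finset.range (n + 1),
          (qExpCoeff q k * qExpCoeff q (n - k)) • (U ^ k * V ^ (n - k)))
      = ∑ p ∈ (Finset.range (2 * N) ×ˢ Finset.range (2 * N)).filter
            (fun p => p.1 + p.2 < 2 * N),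
          (qExpCoeff q p.1 * qExpCoeff q p.2) • (U ^ p.1 * V ^ p.2) := by
    rw [Finset.sum_sigma']
    refine Finset.sum_nbij' (fun p => (p.2, p.1 - p.2)) (fun p => ⟨p.1 + p.2, p.1⟩)
      ?_ ?_ ?_ ?_ ?_
    · intro p hp
      simp only [Finset.mem_sigma, Finset.mem_range] at hp
      simp only [Finset.mem_filter, Finset.mem_product, Finset.mem_range]
      omega
    · intro p hp
      simp only [Finset.mem_filter, Finset.mem_product, Finset.mem_range] at hp
      simp only [Finset.mem_sigma, Finset.mem_range]
      omega
    · intro p hp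
      obtain ⟨n, k⟩ := p
      simp only [Finset.mem_sigma, Finset.mem_range] at hp
      have hnk : k + (n - k) = n := by omega
      simp [hnk]
    · intro p hp
      simp
    · intro p hp
      rfl
  rw [hbij]
  refine (Finset.sum_subset (Finset.filter_subset _ _) ?_).symm
  intro p hp hnp
  simp only [Finset.mem_filter, Finset.mem_product, Finset.mem_range] at hp hnp
  have : N ≤ p.1 ∨ N ≤ p.2 := by omega
  rcases this with h | h
  · rw [hUz _ h, zero_mul, smul_zero]
  · rw [hVz _ h, mul_zero, smul_zero]
end

section
/- For the operator (Gf)(z) = e^{iπz²}·(Ff)(z) on L²(ℝ), where F is the Fourier transform (Ff)(z) = ∫ e^{−2πizt} f(t) dt, one has G³ = e^{iπ/4} F². -/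
open Complex MeasureTheory Filter
open scoped FourierTransform Real Topology

noncomputable section
namespace GaussAux


lemma hasDerivAt_cexp_sq (c : ℂ) (x : ℝ) :
    HasDerivAt (fun y : ℝ => Complex.exp (c * y ^ 2)) (2 * c * x * Complex.exp (c * x ^ 2)) x := by
  have h2 : HasDerivAt (fun w : ℂ => c * w ^ 2) (2 * c * (x:ℂ)) (x:ℂ) := by
    simpa [mul_comm, mul_assoc, mul_left_comm] using ((hasDerivAt_pow 2 ((x:ℂ))).const_mul c)
  have h1 := h2.cexp
  have := h1.comp_ofReal
  simpa [mul_comm, mul_assoc, mul_left_comm] using this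

lemma iteratedDeriv_cexp_sq (c : ℂ) (n : ℕ) :
    ∃ P : Polynomial ℂ, ∀ x : ℝ,
      iteratedDeriv n (fun y : ℝ => Complex.exp (c * y ^ 2)) x
        = P.eval (x : ℂ) * Complex.exp (c * x ^ 2) := by
  induction n with
  | zero => exact ⟨1, fun x => by simp⟩
  | succ n ih =>
    obtain ⟨P, hP⟩ := ih
    refine ⟨Polynomial.derivative P + Polynomial.C (2 * c) * Polynomial.X * P, fun x => ?_⟩
    rw [iteratedDeriv_succ]
    have hfun : iteratedDeriv n (fun y : ℝ => Complex.exp (c * y ^ 2))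
        = fun x : ℝ => P.eval (x : ℂ) * Complex.exp (c * x ^ 2) := funext hP
    rw [hfun]
    have h1 : HasDerivAt (fun y : ℝ => P.eval (y : ℂ))
        ((Polynomial.derivative P).eval (x:ℂ)) x := (P.hasDerivAt (x:ℂ)).comp_ofReal
    have h3 := h1.mul (hasDerivAt_cexp_sq c x)
    rw [show (fun x : ℝ => P.eval (x:ℂ) * Complex.exp (c * x ^ 2))
        = (fun y : ℝ => P.eval (y:ℂ)) * (fun y : ℝ => Complex.exp (c * y ^ 2)) from rfl, h3.deriv]
    simp only [Polynomial.eval_add, Polynomial.eval_mul, Polynomial.eval_C, Polynomial.eval_X]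
    ring

lemma poly_bound (P : Polynomial ℂ) :
    ∃ (k : ℕ) (C : ℝ), ∀ x : ℝ, ‖P.eval (x:ℂ)‖ ≤ C * (1 + ‖x‖) ^ k := by
  refine ⟨P.natDegree, ∑ i ∈ Finset.range (P.natDegree + 1), ‖P.coeff i‖, fun x => ?_⟩
  rw [Polynomial.eval_eq_sum_range]
  refine (norm_sum_le _ _).trans ?_
  rw [Finset.sum_mul]
  apply Finset.sum_le_sum
  intro i hi
  rw [norm_mul, norm_pow]
  have h1 : ‖(x:ℂ)‖ ≤ 1 + ‖x‖ := by
    rw [Complex.norm_real]; linarith [norm_nonneg x]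
  have h2 : ‖(x:ℂ)‖ ^ i ≤ (1 + ‖x‖) ^ P.natDegree := by
    calc ‖(x:ℂ)‖ ^ i ≤ (1 + ‖x‖) ^ i := pow_le_pow_left₀ (norm_nonneg _) h1 i
    _ ≤ (1 + ‖x‖) ^ P.natDegree := by
        apply pow_le_pow_right₀ (by linarith [norm_nonneg x])
        exact Nat.lt_succ_iff.mp (Finset.mem_range.mp hi)
  exact mul_le_mul_of_nonneg_left h2 (norm_nonneg _)

lemma contDiff_chirp (c : ℂ) : ContDiff ℝ ((⊤ : ℕ∞) : WithTop ℕ∞) (fun x : ℝ => Complex.exp (c * x ^ 2)) := by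
  apply Complex.contDiff_exp.comp
  exact contDiff_const.mul (Complex.ofRealCLM.contDiff.pow 2)

lemma hasTemperateGrowth_chirp {c : ℂ} (hc : c.re = 0) :
    Function.HasTemperateGrowth (fun x : ℝ => Complex.exp (c * x ^ 2)) := by
  refine ⟨contDiff_chirp c, fun n => ?_⟩
  obtain ⟨P, hP⟩ := iteratedDeriv_cexp_sq c n
  obtain ⟨k, C, hC⟩ := poly_bound P
  refine ⟨k, C, fun x => ?_⟩
  rw [norm_iteratedFDeriv_eq_norm_iteratedDeriv, hP, norm_mul]
  have : ‖Complex.exp (c * (x:ℂ) ^ 2)‖ = 1 := by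
    rw [Complex.norm_exp]
    have : (c * (x:ℂ) ^ 2).re = 0 := by
      simp [Complex.mul_re, hc, ← Complex.ofReal_pow]
    rw [this, Real.exp_zero]
  rw [this, mul_one]
  exact hC x



lemma claim1 {ε : ℝ} (hε : 0 < ε) (z : ℝ) (h : ℝ → ℂ) (hh : Integrable h) :
    (∫ w : ℝ, Complex.exp (-(π:ℂ) * ((ε:ℂ) - I) * w ^ 2 - 2 * π * I * z * w) * h w)
      = (1 / ((ε:ℂ) - I)) ^ (1/2 : ℂ)
        * ∫ u : ℝ, Complex.exp (-(π:ℂ) / ((ε:ℂ) - I) * ((u:ℂ) - z) ^ 2) * 𝓕 h u := by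
  set b : ℂ := (ε:ℂ) - I with hbdef
  have hb0 : 0 < b.re := by simp [hbdef, hε]
  have hbne : b ≠ 0 := by
    intro hb; rw [hb] at hb0; simp at hb0
  set a : ℂ := 1 / b with hadef
  have hane : a ≠ 0 := by simp [hadef, hbne]
  have ha0 : 0 < a.re := by
    rw [hadef, one_div, Complex.inv_re]
    exact div_pos hb0 (Complex.normSq_pos.2 hbne)
  have hπa : 0 < ((π:ℂ) * a).re := by
    rw [Complex.re_ofReal_mul]
    exact mul_pos Real.pi_pos ha0
  set φ : ℝ → ℂ := fun u : ℝ => Complex.exp (-(π:ℂ) * a * u ^ 2 + 2 * (π:ℂ) * ((z:ℂ)/b) * u)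
    with hφdef
  have hφint : Integrable φ := by
    have h0 := integrable_cexp_quadratic hπa (2 * (π:ℂ) * ((z:ℂ)/b)) 0
    have heq : (fun x : ℝ => Complex.exp (-((π:ℂ)*a) * x ^ 2 + (2 * (π:ℂ) * ((z:ℂ)/b)) * x + 0))
        = φ := by
      funext x
      rw [hφdef]
      congr 1
      ring
    rwa [heq] at h0
  have hFφ : 𝓕 φ = fun t : ℝ => 1 / a ^ (1/2 : ℂ)
      * Complex.exp (-(π:ℂ) / a * ((t:ℂ) + I * ((z:ℂ)/b)) ^ 2) :=
    fourier_gaussian_pi' ha0 ((z:ℂ)/b)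
  -- multiplication formula
  have hLflip : (innerₗ ℝ).flip = innerₗ ℝ := by
    refine LinearMap.ext fun x => LinearMap.ext fun y => ?_
    simp [LinearMap.flip_apply, real_inner_comm]
  have hLcont : Continuous fun p : ℝ × ℝ => (innerₗ ℝ) p.1 p.2 := continuous_inner
  have flip := VectorFourier.integral_fourierIntegral_smul_eq_flip
    (e := Real.fourierChar) (μ := volume) (ν := volume) (L := innerₗ ℝ)
    Real.continuous_fourierChar hLcont hφint hh
  rw [hLflip] at flip
  have flip' : (∫ w : ℝ, 𝓕 φ w * h w) = ∫ u : ℝ, φ u * 𝓕 h u := by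
    have := flip; simp only [smul_eq_mul] at this; exact this
  -- rewrite LHS
  have hsqrtne : a ^ (1/2 : ℂ) ≠ 0 := by
    simp [Complex.cpow_eq_zero_iff, hane]
  have hker : ∀ w : ℝ, Complex.exp (-(π:ℂ) * b * w ^ 2 - 2 * π * I * z * w)
      = a ^ (1/2 : ℂ) * Complex.exp (-(π:ℂ) * (z:ℂ)^2 / b) * 𝓕 φ w := by
    intro w
    rw [hFφ]
    have hpia : -(π:ℂ) / a = -(π:ℂ) * b := by
      rw [hadef]; field_simp
    rw [hpia]
    have h3 : (I:ℂ)^3 = -I := by rw [pow_succ, Complex.I_sq]; ring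
    have h4 : (I:ℂ)^4 = 1 := by rw [pow_succ, h3]; simp
    have hexp : (-(π:ℂ) * b) * ((w:ℂ) + I * ((z:ℂ)/b)) ^ 2
        = (-(π:ℂ) * b * w ^ 2 - 2 * π * I * z * w) + (π:ℂ) * (z:ℂ)^2 / b := by
      field_simp
      ring_nf
      simp only [h3, h4, Complex.I_sq]
      ring
    simp only []
    rw [hexp]
    rw [Complex.exp_add]
    have : a ^ (1/2:ℂ) * Complex.exp (-(π:ℂ) * (z:ℂ)^2 / b) *
        (1 / a ^ (1/2:ℂ) * (Complex.exp (-(π:ℂ) * b * (w:ℂ) ^ 2 - 2 * π * I * z * w) *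
          Complex.exp ((π:ℂ) * (z:ℂ)^2 / b)))
        = (a ^ (1/2:ℂ) * (1 / a ^ (1/2:ℂ))) *
          (Complex.exp (-(π:ℂ) * (z:ℂ)^2 / b) * Complex.exp ((π:ℂ) * (z:ℂ)^2 / b)) *
          Complex.exp (-(π:ℂ) * b * (w:ℂ) ^ 2 - 2 * π * I * z * w) := by ring
    rw [this, mul_one_div, div_self hsqrtne, ← Complex.exp_add,
      show (-(π:ℂ) * (z:ℂ) ^ 2 / b + (π:ℂ) * (z:ℂ) ^ 2 / b : ℂ) = 0 by ring,
      Complex.exp_zero, one_mul, one_mul]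
  calc (∫ w : ℝ, Complex.exp (-(π:ℂ) * b * w ^ 2 - 2 * π * I * z * w) * h w)
      = ∫ w : ℝ, (a ^ (1/2 : ℂ) * Complex.exp (-(π:ℂ) * (z:ℂ)^2 / b)) * (𝓕 φ w * h w) := by
        congr 1; funext w; rw [hker w]; ring
    _ = (a ^ (1/2 : ℂ) * Complex.exp (-(π:ℂ) * (z:ℂ)^2 / b)) * ∫ w : ℝ, 𝓕 φ w * h w :=
        integral_const_mul _ _
    _ = a ^ (1/2 : ℂ) * ∫ u : ℝ, Complex.exp (-(π:ℂ) * (z:ℂ)^2 / b) * (φ u * 𝓕 h u) := by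
        rw [flip', mul_assoc, ← integral_const_mul]
    _ = (1 / b) ^ (1/2 : ℂ) * ∫ u : ℝ, Complex.exp (-(π:ℂ) / b * ((u:ℂ) - z) ^ 2) * 𝓕 h u := by
        rw [← hadef]
        congr 1
        congr 1
        funext u
        rw [hφdef, ← mul_assoc, ← Complex.exp_add]
        congr 2
        rw [hadef]
        field_simp
        ring



lemma bne (ε : ℝ) : ((ε:ℂ) - I) ≠ 0 := by
  intro hc
  have := congrArg Complex.im hc
  simp at this

lemma key (claim1 : ∀ {ε : ℝ}, 0 < ε → ∀ (z : ℝ) (h : ℝ → ℂ), Integrable h →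
    (∫ w : ℝ, Complex.exp (-(π:ℂ) * ((ε:ℂ) - I) * w ^ 2 - 2 * π * I * z * w) * h w)
      = (1 / ((ε:ℂ) - I)) ^ (1/2 : ℂ)
        * ∫ u : ℝ, Complex.exp (-(π:ℂ) / ((ε:ℂ) - I) * ((u:ℂ) - z) ^ 2) * 𝓕 h u)
    (z : ℝ) (h : ℝ → ℂ) (hh : Integrable h) (hh' : Integrable (𝓕 h)) :
    𝓕 (fun w : ℝ => Complex.exp ((π:ℂ) * I * w ^ 2) * h w) z
      = Complex.exp ((π:ℂ) * I / 4)
        * ∫ u : ℝ, Complex.exp (-((π:ℂ) * I) * ((u:ℂ) - z) ^ 2) * 𝓕 h u := by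
  set L : ℝ → ℂ := fun ε =>
    ∫ w : ℝ, Complex.exp (-(π:ℂ) * ((ε:ℂ) - I) * w ^ 2 - 2 * π * I * z * w) * h w with hL
  set R : ℝ → ℂ := fun ε => (1 / ((ε:ℂ) - I)) ^ (1/2 : ℂ)
    * ∫ u : ℝ, Complex.exp (-(π:ℂ) / ((ε:ℂ) - I) * ((u:ℂ) - z) ^ 2) * 𝓕 h u with hR
  have hLR : L =ᶠ[𝓝[>] (0:ℝ)] R := by
    filter_upwards [self_mem_nhdsWithin] with ε hε
    exact claim1 hε z h hh
  -- Tendsto L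
  have hLtendsto : Tendsto L (𝓝[>] (0:ℝ))
      (𝓝 (𝓕 (fun w : ℝ => Complex.exp ((π:ℂ) * I * w ^ 2) * h w) z)) := by
    have heq : 𝓕 (fun w : ℝ => Complex.exp ((π:ℂ) * I * w ^ 2) * h w) z
        = ∫ w : ℝ, Complex.exp (-(π:ℂ) * (((0:ℝ):ℂ) - I) * w ^ 2 - 2 * π * I * z * w) * h w := by
      rw [Real.fourier_real_eq_integral_exp_smul]
      congr 1
      funext w
      rw [smul_eq_mul, ← mul_assoc, ← Complex.exp_add]
      congr 2
      push_cast
      ring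
    rw [heq]
    apply tendsto_integral_filter_of_dominated_convergence (fun w => ‖h w‖)
    · filter_upwards with ε
      apply AEStronglyMeasurable.mul ?_ hh.1
      apply Continuous.aestronglyMeasurable
      fun_prop
    · filter_upwards [self_mem_nhdsWithin] with ε hε
      filter_upwards with w
      rw [norm_mul]
      have hre : (-(π:ℂ) * ((ε:ℂ) - I) * (w:ℂ) ^ 2 - 2 * π * I * z * w).re
          = -(π * ε * w ^ 2) := by
        have : (-(π:ℂ) * ((ε:ℂ) - I) * (w:ℂ) ^ 2 - 2 * π * I * z * w)
            = Complex.ofReal (-(π * ε * w ^ 2))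
              + Complex.I * Complex.ofReal (π * w ^ 2 - 2 * π * z * w) := by
          push_cast; ring
        rw [this]
        simp [Complex.add_re, Complex.mul_re, ← Complex.ofReal_pow]
      have h1 : ‖Complex.exp (-(π:ℂ) * ((ε:ℂ) - I) * (w:ℂ) ^ 2 - 2 * π * I * z * w)‖ ≤ 1 := by
        rw [Complex.norm_exp, hre]
        apply Real.exp_le_one_iff.2
        have hε' : (0:ℝ) < ε := hε
        have : (0:ℝ) ≤ π * ε * w ^ 2 := by positivity
        linarith
      calc ‖Complex.exp _‖ * ‖h w‖ ≤ 1 * ‖h w‖ :=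
            mul_le_mul_of_nonneg_right h1 (norm_nonneg _)
        _ = ‖h w‖ := one_mul _
    · exact hh.norm
    · filter_upwards with w
      apply Tendsto.mono_left ?_ nhdsWithin_le_nhds
      apply Tendsto.mul_const
      apply (Continuous.tendsto ?_ 0)
      fun_prop
  -- Tendsto R
  have hRtendsto : Tendsto R (𝓝[>] (0:ℝ))
      (𝓝 (Complex.exp ((π:ℂ) * I / 4)
        * ∫ u : ℝ, Complex.exp (-((π:ℂ) * I) * ((u:ℂ) - z) ^ 2) * 𝓕 h u)) := by
    apply Tendsto.mul
    · -- coefficient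
      have hval0 : (1 / (((0:ℝ):ℂ) - I)) = I := by
        rw [show (((0:ℝ):ℂ) - I) = -I by simp, one_div, inv_neg, Complex.inv_I, neg_neg]
      have h1 : ContinuousAt (fun ε : ℝ => 1 / ((ε:ℂ) - I)) 0 := by
        exact ContinuousAt.div continuousAt_const (by fun_prop) (bne 0)
      have h2 : ContinuousAt (fun w : ℂ => w ^ (1/2 : ℂ)) (1 / (((0:ℝ):ℂ) - I)) := by
        apply continuousAt_cpow_const
        rw [hval0]
        simp [Complex.mem_slitPlane_iff]
      have hvv : (1 / (((0:ℝ):ℂ) - I)) ^ (1/2 : ℂ) = Complex.exp ((π:ℂ) * I / 4) := by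
        rw [hval0, Complex.cpow_def_of_ne_zero Complex.I_ne_zero, Complex.log_I]
        congr 1
        ring
      have hc : Tendsto (fun ε : ℝ => (1 / ((ε:ℂ) - I)) ^ (1/2 : ℂ)) (𝓝 (0:ℝ))
          (𝓝 ((1 / (((0:ℝ):ℂ) - I)) ^ (1/2 : ℂ))) := Filter.Tendsto.comp h2 h1
      rw [hvv] at hc
      exact hc.mono_left nhdsWithin_le_nhds
    · apply tendsto_integral_filter_of_dominated_convergence (fun u => ‖𝓕 h u‖)
      · filter_upwards with ε
        apply AEStronglyMeasurable.mul ?_ hh'.1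
        apply Continuous.aestronglyMeasurable
        fun_prop
      · filter_upwards [self_mem_nhdsWithin] with ε hε
        filter_upwards with u
        rw [norm_mul]
        have hre : (-(π:ℂ) / ((ε:ℂ) - I) * ((u:ℂ) - z) ^ 2).re
            = (-(π * (u - z) ^ 2)) * (((ε:ℂ) - I)⁻¹).re := by
          have : (-(π:ℂ) / ((ε:ℂ) - I) * ((u:ℂ) - z) ^ 2)
              = Complex.ofReal (-(π * (u - z) ^ 2)) * (((ε:ℂ) - I)⁻¹) := by
            push_cast; ring
          rw [this, Complex.re_ofReal_mul]
        have h1 : ‖Complex.exp (-(π:ℂ) / ((ε:ℂ) - I) * ((u:ℂ) - z) ^ 2)‖ ≤ 1 := by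
          rw [Complex.norm_exp, hre]
          apply Real.exp_le_one_iff.2
          apply mul_nonpos_of_nonpos_of_nonneg
          · have : (0:ℝ) ≤ π * (u - z)^2 := by positivity
            linarith
          · rw [Complex.inv_re]
            apply div_nonneg ?_ (Complex.normSq_nonneg _)
            simp [(show (0:ℝ) < ε from hε).le]
        calc ‖Complex.exp _‖ * ‖𝓕 h u‖ ≤ 1 * ‖𝓕 h u‖ :=
              mul_le_mul_of_nonneg_right h1 (norm_nonneg _)
          _ = ‖𝓕 h u‖ := one_mul _
      · exact hh'.norm
      · filter_upwards with u
        apply Tendsto.mono_left ?_ nhdsWithin_le_nhds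
        apply Tendsto.mul_const
        have hd : ContinuousAt (fun ε : ℝ => ((ε:ℂ) - I)) 0 := by fun_prop
        have hcont : ContinuousAt (fun ε : ℝ =>
            Complex.exp (-(π:ℂ) / ((ε:ℂ) - I) * ((u:ℂ) - z) ^ 2)) 0 := by
          apply Complex.continuous_exp.continuousAt.comp
          exact ContinuousAt.mul (ContinuousAt.div continuousAt_const hd (bne 0))
            continuousAt_const
        have hs : -(π:ℂ) / (((0:ℝ):ℂ) - I) = -((π:ℂ) * I) := by
          rw [div_eq_iff (bne 0)]
          push_cast
          linear_combination (-(π:ℂ)) * Complex.I_sq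
        have hval : Complex.exp (-(π:ℂ) / (((0:ℝ):ℂ) - I) * ((u:ℂ) - z) ^ 2)
            = Complex.exp (-((π:ℂ) * I) * ((u:ℂ) - z) ^ 2) := by
          rw [hs]
        rw [← hval]
        exact hcont.tendsto
  have := hLtendsto
  rw [tendsto_congr' hLR] at this
  exact tendsto_nhds_unique this hRtendsto


open SchwartzMap in
def chirpMul (c : ℂ) (hc : c.re = 0) : SchwartzMap ℝ ℂ →L[ℝ] SchwartzMap ℝ ℂ :=
  SchwartzMap.bilinLeftCLM (ContinuousLinearMap.mul ℝ ℂ) (hasTemperateGrowth_chirp hc)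

lemma chirpMul_apply (c : ℂ) (hc : c.re = 0) (g : SchwartzMap ℝ ℂ) (x : ℝ) :
    chirpMul c hc g x = g x * Complex.exp (c * x ^ 2) := rfl

lemma hπI : ((π:ℂ) * I).re = 0 := by simp
lemma hπI' : (-((π:ℂ) * I)).re = 0 := by simp


lemma key' (z : ℝ) (h : ℝ → ℂ) (hh : Integrable h) (hh' : Integrable (𝓕 h)) :
    𝓕 (fun w : ℝ => Complex.exp ((π:ℂ) * I * w ^ 2) * h w) z
      = Complex.exp ((π:ℂ) * I / 4)
        * ∫ u : ℝ, Complex.exp (-((π:ℂ) * I) * ((u:ℂ) - z) ^ 2) * 𝓕 h u :=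
  key (fun {ε} hε z h hh => claim1 hε z h hh) z h hh hh'

end GaussAux

open GaussAux Complex MeasureTheory Real
open scoped FourierTransform

/-- For `(Gf)(z) = e^{iπz²} (𝓕 f)(z)`, with `𝓕` the Fourier transform with kernel
`e^{-2πizt}`, one has `G³ = e^{iπ/4} F²` (on Schwartz functions, whence on `L²(ℝ)`). -/
theorem gauss_cubed_eq_fourier_sq (f : SchwartzMap ℝ ℂ) (z : ℝ) :
    (fun (g : ℝ → ℂ) (w : ℝ) => Complex.exp (Real.pi * Complex.I * w ^ 2) * 𝓕 g w)
        ((fun (g : ℝ → ℂ) (w : ℝ) => Complex.exp (Real.pi * Complex.I * w ^ 2) * 𝓕 g w)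
          ((fun (g : ℝ → ℂ) (w : ℝ) => Complex.exp (Real.pi * Complex.I * w ^ 2) * 𝓕 g w)
            ⇑f)) z
      = Complex.exp (Real.pi * Complex.I / 4) * 𝓕 (𝓕 ⇑f) z := by
  have hcoe : ⇑(SchwartzMap.fourierTransformCLM ℂ f) = 𝓕 ⇑f :=
    SchwartzMap.fourier_coe f
  set F1 : SchwartzMap ℝ ℂ := chirpMul ((π:ℂ) * I) hπI (SchwartzMap.fourierTransformCLM ℂ f)
    with hF1def
  have hF1 : (fun w : ℝ => Complex.exp ((π:ℂ) * Complex.I * (w:ℂ) ^ 2) * 𝓕 (⇑f) w) = ⇑F1 := by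
    funext w
    rw [hF1def, chirpMul_apply, hcoe, mul_comm]
  set F2 : SchwartzMap ℝ ℂ := chirpMul ((π:ℂ) * I) hπI (SchwartzMap.fourierTransformCLM ℂ F1)
    with hF2def
  have hF2 : (fun w : ℝ => Complex.exp ((π:ℂ) * Complex.I * (w:ℂ) ^ 2) * 𝓕 (⇑F1) w) = ⇑F2 := by
    funext w
    rw [hF2def, chirpMul_apply, SchwartzMap.fourierTransformCLM_apply, SchwartzMap.fourier_coe, mul_comm]
  -- the function ψ
  set ψ : ℝ → ℂ := fun u => Complex.exp (-((π:ℂ) * I) * u ^ 2) * 𝓕 (𝓕 ⇑f) u with hψdef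
  set P : SchwartzMap ℝ ℂ := chirpMul (-((π:ℂ) * I)) hπI'
    (SchwartzMap.fourierTransformCLM ℂ (SchwartzMap.fourierTransformCLM ℂ f)) with hPdef
  have hP : ψ = ⇑P := by
    funext u
    rw [hψdef, hPdef, chirpMul_apply, SchwartzMap.fourierTransformCLM_apply, SchwartzMap.fourier_coe, hcoe]
    simp [mul_comm]
  -- key applied to F1
  have hkeyF1 : ∀ w : ℝ, 𝓕 (⇑F1) w = Complex.exp ((π:ℂ) * I / 4)
      * ∫ u : ℝ, Complex.exp (-((π:ℂ) * I) * ((u:ℂ) - w) ^ 2) * 𝓕 (𝓕 ⇑f) u := by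
    intro w
    rw [← hF1]
    apply key' w (𝓕 ⇑f)
    · rw [← hcoe]; exact (SchwartzMap.fourierTransformCLM ℂ f).integrable
    · rw [← hcoe, ← SchwartzMap.fourier_coe, ← SchwartzMap.fourierTransformCLM_apply ℂ (SchwartzMap.fourierTransformCLM ℂ f)]
      exact (SchwartzMap.fourierTransformCLM ℂ (SchwartzMap.fourierTransformCLM ℂ f)).integrable
  -- F2 in terms of ψ
  have hF2eq : ⇑F2 = fun w : ℝ => Complex.exp ((π:ℂ) * I / 4) * 𝓕 ψ (-w) := by
    funext w
    rw [← hF2]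
    beta_reduce
    rw [hkeyF1 w]
    calc Complex.exp ((π:ℂ) * I * w ^ 2) * (Complex.exp ((π:ℂ) * I / 4)
          * ∫ u : ℝ, Complex.exp (-((π:ℂ) * I) * ((u:ℂ) - w) ^ 2) * 𝓕 (𝓕 ⇑f) u)
        = Complex.exp ((π:ℂ) * I / 4) * ∫ u : ℝ, Complex.exp ((π:ℂ) * I * w ^ 2)
            * (Complex.exp (-((π:ℂ) * I) * ((u:ℂ) - w) ^ 2) * 𝓕 (𝓕 ⇑f) u) := by
          rw [mul_left_comm, ← integral_const_mul]
      _ = Complex.exp ((π:ℂ) * I / 4)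
            * ∫ u : ℝ, Complex.exp (((-2) * π * u * (-w) : ℝ) * I) • ψ u := by
          congr 1
          apply integral_congr_ae
          filter_upwards with u
          rw [hψdef, smul_eq_mul, ← mul_assoc, ← mul_assoc, ← Complex.exp_add,
            ← Complex.exp_add]
          congr 1
          push_cast
          ring
      _ = Complex.exp ((π:ℂ) * I / 4) * 𝓕 ψ (-w) := by
          rw [Real.fourier_real_eq_integral_exp_smul]
  -- apply 𝓕 and use Fourier inversion
  have hψint : Integrable ψ := by rw [hP]; exact P.integrable
  have hψ'int : Integrable (𝓕 ψ) := by
    rw [hP, ← SchwartzMap.fourier_coe, ← SchwartzMap.fourierTransformCLM_apply ℂ P]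
    exact (SchwartzMap.fourierTransformCLM ℂ P).integrable
  have hinv : 𝓕 (𝓕⁻ ψ) z = ψ z := by
    apply MeasureTheory.Integrable.fourier_fourierInv_eq hψint hψ'int
    rw [hP]
    exact P.continuous.continuousAt
  have hstep : 𝓕 (⇑F2) z = Complex.exp ((π:ℂ) * I / 4) * ψ z := by
    rw [hF2eq]
    have h1 : (fun w : ℝ => Complex.exp ((π:ℂ) * I / 4) * 𝓕 ψ (-w))
        = fun w : ℝ => Complex.exp ((π:ℂ) * I / 4) * 𝓕⁻ ψ w := by
      funext w
      rw [Real.fourierInv_eq_fourier_neg]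
    rw [h1]
    have h2 : 𝓕 (fun w : ℝ => Complex.exp ((π:ℂ) * I / 4) * 𝓕⁻ ψ w) z
        = Complex.exp ((π:ℂ) * I / 4) * 𝓕 (𝓕⁻ ψ) z := by
      rw [Real.fourier_real_eq_integral_exp_smul,
        Real.fourier_real_eq_integral_exp_smul, ← integral_const_mul]
      apply integral_congr_ae
      filter_upwards with v
      simp only [smul_eq_mul]
      ring
    rw [h2, hinv]
  -- put everything together
  show Complex.exp ((π:ℂ) * Complex.I * (z:ℂ) ^ 2)
      * 𝓕 (fun w : ℝ => Complex.exp ((π:ℂ) * Complex.I * (w:ℂ) ^ 2)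
        * 𝓕 (fun w' : ℝ => Complex.exp ((π:ℂ) * Complex.I * (w':ℂ) ^ 2) * 𝓕 (⇑f) w') w) z
      = Complex.exp ((π:ℂ) * Complex.I / 4) * 𝓕 (𝓕 ⇑f) z
  rw [hF1, hF2, hstep, hψdef]
  beta_reduce
  have hre : Complex.exp ((π:ℂ) * Complex.I * (z:ℂ) ^ 2)
      * (Complex.exp ((π:ℂ) * Complex.I / 4)
        * (Complex.exp (-((π:ℂ) * I) * (z:ℂ) ^ 2) * 𝓕 (𝓕 ⇑f) z))
      = (Complex.exp ((π:ℂ) * Complex.I * (z:ℂ) ^ 2)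
          * Complex.exp (-((π:ℂ) * I) * (z:ℂ) ^ 2))
        * (Complex.exp ((π:ℂ) * Complex.I / 4) * 𝓕 (𝓕 ⇑f) z) := by ring
  rw [hre, ← Complex.exp_add,
    show ((π:ℂ) * Complex.I * (z:ℂ) ^ 2 + -((π:ℂ) * I) * (z:ℂ) ^ 2 : ℂ) = 0 by ring,
    Complex.exp_zero, one_mul]
end
end

section
/- Given unitary operators S, K, K̂, F on a Hilbert space with S = KF, S⁵ = e^{iα}I, S = e^{iβ}K̂^{−1}G with G³ = e^{iπ/4}F², F⁴ = I, and α = 3β + π/4, the pentagon relation K S^{−1} K S = S^{−4} K̂ S⁴ · S^{−3} K̂ S³ · S^{−2} K̂ S² holds. -/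
/-- Abstract operator pentagon: given unitary operators `S, K, K̂, F, G` on a complex
Hilbert space with `S = KF`, `S⁵ = e^{iα}`, `S = e^{iβ} K̂⁻¹ G`, `G³ = e^{iπ/4} F²`,
`F⁴ = 1`, and `α = 3β + π/4`, the pentagon relation
`K S⁻¹ K S = (S⁻⁴ K̂ S⁴)(S⁻³ K̂ S³)(S⁻² K̂ S²)` holds. -/
theorem operator_pentagon {H : Type*} [NormedAddCommGroup H] [InnerProductSpace ℂ H]
    [CompleteSpace H] (α β : ℝ) (S K Kh F G : unitary (H →L[ℂ] H))
    (hSK : (S : H →L[ℂ] H) = (K : H →L[ℂ] H) * F)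
    (hS5 : (S : H →L[ℂ] H) ^ 5 = Complex.exp (Complex.I * α) • (1 : H →L[ℂ] H))
    (hSG : (S : H →L[ℂ] H) =
      Complex.exp (Complex.I * β) • ((↑(Kh⁻¹) : H →L[ℂ] H) * G))
    (hG3 : (G : H →L[ℂ] H) ^ 3 =
      Complex.exp (Complex.I * Real.pi / 4) • ((F : H →L[ℂ] H) ^ 2))
    (hF4 : (F : H →L[ℂ] H) ^ 4 = 1)
    (hαβ : α = 3 * β + Real.pi / 4) :
    (K : H →L[ℂ] H) * ↑S⁻¹ * ↑K * ↑S =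
      (↑S⁻¹) ^ 4 * ↑Kh * (↑S) ^ 4 * ((↑S⁻¹) ^ 3 * ↑Kh * (↑S) ^ 3) *
        ((↑S⁻¹) ^ 2 * ↑Kh * (↑S) ^ 2) := by
  have hsi : (↑(S⁻¹) : H →L[ℂ] H) * ↑S = 1 := by
    rw [← Submonoid.coe_mul, inv_mul_cancel, Submonoid.coe_one]
  have hsi' : (↑S : H →L[ℂ] H) * ↑(S⁻¹) = 1 := by
    rw [← Submonoid.coe_mul, mul_inv_cancel, Submonoid.coe_one]
  have hkh : (↑Kh : H →L[ℂ] H) * ↑(Kh⁻¹) = 1 := by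
    rw [← Submonoid.coe_mul, mul_inv_cancel, Submonoid.coe_one]
  have hc1 : ∀ x : H →L[ℂ] H, (↑(S⁻¹) : H →L[ℂ] H) * ((S : H →L[ℂ] H) * x) = x := by
    intro x; rw [← mul_assoc, hsi, one_mul]
  have hc2 : ∀ x : H →L[ℂ] H, (S : H →L[ℂ] H) * ((↑(S⁻¹) : H →L[ℂ] H) * x) = x := by
    intro x; rw [← mul_assoc, hsi', one_mul]
  -- K = S * F^3
  have hK : (K : H →L[ℂ] H) = (S : H →L[ℂ] H) * (F : H →L[ℂ] H) ^ 3 := by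
    have : (K : H →L[ℂ] H) * (F : H →L[ℂ] H) ^ 4 = (K : H →L[ℂ] H) := by
      rw [hF4, mul_one]
    calc (K : H →L[ℂ] H) = (K : H →L[ℂ] H) * (F : H →L[ℂ] H) ^ 4 := this.symm
      _ = ((K : H →L[ℂ] H) * F) * (F : H →L[ℂ] H) ^ 3 := by
          rw [mul_assoc, ← pow_succ']
      _ = (S : H →L[ℂ] H) * (F : H →L[ℂ] H) ^ 3 := by rw [← hSK]
  -- Kh = e^{iβ} • (G * S⁻¹)
  have hKh : (Kh : H →L[ℂ] H) =
      Complex.exp (Complex.I * β) • ((G : H →L[ℂ] H) * ↑(S⁻¹)) := by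
    have h1 : (Kh : H →L[ℂ] H) * (S : H →L[ℂ] H)
        = Complex.exp (Complex.I * β) • (G : H →L[ℂ] H) := by
      rw [hSG, mul_smul_comm, ← mul_assoc, hkh, one_mul]
    calc (Kh : H →L[ℂ] H) = (Kh : H →L[ℂ] H) * ((S : H →L[ℂ] H) * ↑(S⁻¹)) := by
          rw [hsi', mul_one]
      _ = ((Kh : H →L[ℂ] H) * (S : H →L[ℂ] H)) * ↑(S⁻¹) := by rw [mul_assoc]
      _ = Complex.exp (Complex.I * β) • ((G : H →L[ℂ] H) * ↑(S⁻¹)) := by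
          rw [h1, smul_mul_assoc]
  have hg3 : ∀ x : H →L[ℂ] H, (G : H →L[ℂ] H) * ((G : H →L[ℂ] H) * ((G : H →L[ℂ] H) * x))
      = Complex.exp (Complex.I * Real.pi / 4) • ((F : H →L[ℂ] H) * ((F : H →L[ℂ] H) * x)) := by
    intro x
    calc (G : H →L[ℂ] H) * ((G : H →L[ℂ] H) * ((G : H →L[ℂ] H) * x))
        = ((G : H →L[ℂ] H) ^ 3) * x := by rw [pow_succ, pow_two, mul_assoc, mul_assoc]
      _ = _ := by rw [hG3, smul_mul_assoc, pow_two, mul_assoc]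
  have hs5 : ∀ x : H →L[ℂ] H,
      (S : H →L[ℂ] H) * ((S : H →L[ℂ] H) * ((S : H →L[ℂ] H) * ((S : H →L[ℂ] H) * ((S : H →L[ℂ] H) * x))))
      = Complex.exp (Complex.I * α) • x := by
    intro x
    calc (S : H →L[ℂ] H) * ((S : H →L[ℂ] H) * ((S : H →L[ℂ] H) * ((S : H →L[ℂ] H) * ((S : H →L[ℂ] H) * x))))
        = ((S : H →L[ℂ] H) ^ 5) * x := by simp [pow_succ, mul_assoc]
      _ = Complex.exp (Complex.I * α) • x := by rw [hS5, smul_mul_assoc, one_mul]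
  have hf4 : ∀ x : H →L[ℂ] H, (F : H →L[ℂ] H) * ((F : H →L[ℂ] H) * ((F : H →L[ℂ] H) * ((F : H →L[ℂ] H) * x))) = x := by
    intro x
    calc (F : H →L[ℂ] H) * ((F : H →L[ℂ] H) * ((F : H →L[ℂ] H) * ((F : H →L[ℂ] H) * x)))
        = ((F : H →L[ℂ] H) ^ 4) * x := by simp [pow_succ, mul_assoc]
      _ = x := by rw [hF4, one_mul]
  have hsi4 : ∀ x : H →L[ℂ] H, Complex.exp (Complex.I * α) •
      ((↑(S⁻¹) : H →L[ℂ] H) * (↑(S⁻¹) * (↑(S⁻¹) * (↑(S⁻¹) * x)))) = (S : H →L[ℂ] H) * x := by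
    intro x; rw [← hs5]; simp [hc2]
  rw [hK, hKh]
  simp only [pow_succ, pow_zero, one_mul, mul_assoc, smul_mul_assoc, mul_smul_comm,
    smul_smul, hc1, hc2, hg3, hf4]
  have hsc : Complex.exp (Complex.I * β) * (Complex.exp (Complex.I * β) *
      (Complex.exp (Complex.I * β) * Complex.exp (Complex.I * Real.pi / 4)))
      = Complex.exp (Complex.I * α) := by
    rw [← Complex.exp_add, ← Complex.exp_add, ← Complex.exp_add, hαβ]
    push_cast; ring_nf
  rw [hsc, hsi4]
end
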